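/- arXiv:1908.03462 — 5 statements merged into one kernel-verified Lean document; each statement's English description precedes it below -/
import Mathlib

section
/- For all W, V ∈ 𝕍_{n,r} there exists an orthogonal matrix Q ∈ O(r) such that ‖W − V Q‖_F ≤ √2 · ‖W Wᵀ (I − V Vᵀ)‖_F. -/
open Matrix

/-- The Frobenius norm of a real matrix: the square root of the sum of squared entries. -/
noncomputable def frobNorm {m r : ℕ} (M : Matrix (Fin m) (Fin r) ℝ) : ℝ :=
  Real.sqrt (∑ i, ∑ j, (M i j) ^ 2)

lemma frob_eq_trace {m r : ℕ} (M : Matrix (Fin m) (Fin r) ℝ) :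
    frobNorm M = Real.sqrt (trace (Mᵀ * M)) := by
  unfold frobNorm
  congr 1
  rw [Finset.sum_comm]
  simp [trace, Matrix.mul_apply, diag, pow_two]

lemma colMatrix_orth {r : ℕ} (b : OrthonormalBasis (Fin r) ℝ (EuclideanSpace ℝ (Fin r))) :
    (Matrix.of fun i j => b j i)ᵀ * (Matrix.of fun i j => b j i) = 1 := by
  ext j k
  have ho := b.orthonormal
  rw [orthonormal_iff_ite] at ho
  have h := ho j k
  rw [PiLp.inner_apply] at h
  simp only [RCLike.inner_apply, conj_trivial] at h
  simp [Matrix.mul_apply, Matrix.one_apply, ← h]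
  exact Finset.sum_congr rfl fun _ _ => mul_comm _ _

lemma dot_mulVec_mulVec {m n : ℕ} (A : Matrix (Fin m) (Fin n) ℝ) (x y : Fin n → ℝ) :
    (A *ᵥ x) ⬝ᵥ (A *ᵥ y) = x ⬝ᵥ ((Aᵀ * A) *ᵥ y) := by
  rw [← mulVec_mulVec, dotProduct_mulVec x, vecMul_transpose]

lemma dot_self_nonneg {n : ℕ} (x : Fin n → ℝ) : 0 ≤ x ⬝ᵥ x :=
  Finset.sum_nonneg fun _ _ => mul_self_nonneg _

/-- For all `W, V ∈ 𝕍_{n,r}` there exists `Q ∈ O(r)` with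
`‖W − V Q‖_F ≤ √2 · ‖W Wᵀ (I − V Vᵀ)‖_F`. -/
theorem stmt_2 (n r : ℕ) (W V : Matrix (Fin n) (Fin r) ℝ)
    (hW : Wᵀ * W = 1) (hV : Vᵀ * V = 1) :
    ∃ Q : Matrix (Fin r) (Fin r) ℝ, Qᵀ * Q = 1 ∧ Q * Qᵀ = 1 ∧
      frobNorm (W - V * Q) ≤ Real.sqrt 2 * frobNorm (W * Wᵀ * (1 - V * Vᵀ)) := by
  classical
  have hMt : ∀ (A : Matrix (Fin r) (Fin r) ℝ), Aᴴ = Aᵀ := fun A => by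
    ext i j; simp [conjTranspose_apply]
  set M : Matrix (Fin r) (Fin r) ℝ := Vᵀ * W with hM
  have hPSD : (Mᴴ * M).PosSemidef := posSemidef_conjTranspose_mul_self M
  have hHer : (Mᴴ * M).IsHermitian := hPSD.isHermitian
  set lam := hHer.eigenvalues with hlam
  set u := hHer.eigenvectorBasis with hu
  have hnn : ∀ i, 0 ≤ lam i := fun i => hPSD.eigenvalues_nonneg i
  have hudot : ∀ i j, (⇑(u i)) ⬝ᵥ (⇑(u j)) = if i = j then (1:ℝ) else 0 := by
    intro i j
    have ho := u.orthonormal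
    rw [orthonormal_iff_ite] at ho
    have h := ho i j
    rw [PiLp.inner_apply] at h
    simpa [dotProduct, mul_comm] using h
  have heig : ∀ i, (Mᴴ * M) *ᵥ ⇑(u i) = lam i • ⇑(u i) := fun i =>
    hHer.mulVec_eigenvectorBasis i
  have hMdot : ∀ i j, (M *ᵥ ⇑(u i)) ⬝ᵥ (M *ᵥ ⇑(u j)) = if i = j then lam j else 0 := by
    intro i j
    rw [dot_mulVec_mulVec, ← hMt, heig, dotProduct_smul, hudot, smul_eq_mul]
    by_cases h : i = j <;> simp [h]
  -- eigenvalues are at most 1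
  have hle1 : ∀ i, lam i ≤ 1 := by
    intro i
    have h0 := hMdot i i
    rw [if_pos rfl] at h0
    set y : Fin n → ℝ := W *ᵥ ⇑(u i) with hy
    have hMy : M *ᵥ ⇑(u i) = Vᵀ *ᵥ y := by rw [hy, hM, ← mulVec_mulVec]
    set z : Fin r → ℝ := Vᵀ *ᵥ y with hz
    set p : Fin n → ℝ := V *ᵥ z with hp
    have h1 : z ⬝ᵥ z = y ⬝ᵥ p := by
      rw [hp, dotProduct_mulVec y, ← mulVec_transpose, dotProduct_comm, hz]
    have h2 : p ⬝ᵥ p = z ⬝ᵥ z := by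
      rw [hp, dot_mulVec_mulVec, hV, one_mulVec]
    have h3 : 0 ≤ (y - p) ⬝ᵥ (y - p) := dot_self_nonneg _
    have h4 : (y - p) ⬝ᵥ (y - p) = y ⬝ᵥ y - 2 * (y ⬝ᵥ p) + p ⬝ᵥ p := by
      rw [sub_dotProduct, dotProduct_sub, dotProduct_sub, dotProduct_comm p y]; ring
    have h5 : z ⬝ᵥ z ≤ y ⬝ᵥ y := by nlinarith [h1, h2, h3, h4]
    have h6 : y ⬝ᵥ y = 1 := by
      rw [hy, dot_mulVec_mulVec, hW, one_mulVec, hudot, if_pos rfl]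
    have h7 : lam i = z ⬝ᵥ z := by rw [← h0, hMy, hz]
    linarith
  -- orthonormal family of normalized images
  set s : Set (Fin r) := {i | lam i ≠ 0} with hs
  set v : Fin r → EuclideanSpace ℝ (Fin r) := fun i =>
    (Real.sqrt (lam i))⁻¹ • ((WithLp.equiv 2 (Fin r → ℝ)).symm (M *ᵥ ⇑(u i))) with hv
  have hvinner : ∀ i j, (inner ℝ (v i) (v j) : ℝ) =
      (Real.sqrt (lam i))⁻¹ * ((Real.sqrt (lam j))⁻¹ * ((M *ᵥ ⇑(u i)) ⬝ᵥ (M *ᵥ ⇑(u j)))) := by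
    intro i j
    simp only [hv]
    rw [real_inner_smul_left, real_inner_smul_right]
    congr 2
    simp [WithLp.equiv_symm_apply, PiLp.inner_apply, dotProduct, mul_comm]
  have horth : Orthonormal ℝ (s.restrict v) := by
    rw [orthonormal_iff_ite]
    rintro ⟨i, hi⟩ ⟨j, hj⟩
    rw [show s.restrict v ⟨i, hi⟩ = v i from rfl, show s.restrict v ⟨j, hj⟩ = v j from rfl, hvinner, hMdot]
    by_cases h : i = j
    · subst h
      simp only [if_pos rfl, Subtype.mk.injEq, if_pos rfl, if_true]
      have hpos : 0 < lam i := lt_of_le_of_ne (hnn i) (Ne.symm hi)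
      have hsq : Real.sqrt (lam i) * Real.sqrt (lam i) = lam i := Real.mul_self_sqrt (hnn i)
      field_simp
      rw [sq, hsq]
    · simp [h, Subtype.mk.injEq]
  obtain ⟨b, hb⟩ := horth.exists_orthonormalBasis_extension_of_card_eq
    (by simp [finrank_euclideanSpace])
  have hMb : ∀ i, M *ᵥ ⇑(u i) = Real.sqrt (lam i) • ⇑(b i) := by
    intro i
    by_cases h : lam i = 0
    · have h0 : (M *ᵥ ⇑(u i)) ⬝ᵥ (M *ᵥ ⇑(u i)) = 0 := by rw [hMdot, if_pos rfl, h]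
      rw [dotProduct_self_eq_zero] at h0
      rw [h0, h, Real.sqrt_zero, zero_smul]
    · have hbi : b i = v i := hb i h
      have hne : Real.sqrt (lam i) ≠ 0 :=
        Real.sqrt_ne_zero'.mpr (lt_of_le_of_ne (hnn i) (Ne.symm h))
      rw [hbi, hv]
      simp only [WithLp.ofLp_smul, WithLp.equiv_symm_apply, WithLp.ofLp_toLp]
      rw [smul_smul, mul_inv_cancel₀ hne, one_smul]
  have hbdot : ∀ i j, (⇑(b i)) ⬝ᵥ (⇑(b j)) = if i = j then (1:ℝ) else 0 := by
    intro i j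
    have ho := b.orthonormal
    rw [orthonormal_iff_ite] at ho
    have h := ho i j
    rw [PiLp.inner_apply] at h
    simpa [dotProduct, mul_comm] using h
  -- the orthogonal matrices
  set Uu : Matrix (Fin r) (Fin r) ℝ := Matrix.of fun i j => u j i with hUu
  set B : Matrix (Fin r) (Fin r) ℝ := Matrix.of fun i j => b j i with hB
  have hU1 : Uuᵀ * Uu = 1 := colMatrix_orth u
  have hU2 : Uu * Uuᵀ = 1 := mul_eq_one_comm.mp hU1
  have hB1 : Bᵀ * B = 1 := colMatrix_orth b
  have hB2 : B * Bᵀ = 1 := mul_eq_one_comm.mp hB1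
  refine ⟨B * Uuᵀ, ?_, ?_, ?_⟩
  · rw [transpose_mul, transpose_transpose, Matrix.mul_assoc, ← Matrix.mul_assoc Bᵀ, hB1,
      Matrix.one_mul, hU2]
  · rw [transpose_mul, transpose_transpose, Matrix.mul_assoc, ← Matrix.mul_assoc Uuᵀ, hU1,
      Matrix.one_mul, hB2]
  set Q : Matrix (Fin r) (Fin r) ℝ := B * Uuᵀ with hQ
  have hQ1 : Qᵀ * Q = 1 := by
    rw [hQ, transpose_mul, transpose_transpose, Matrix.mul_assoc, ← Matrix.mul_assoc Bᵀ, hB1,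
      Matrix.one_mul, hU2]
  -- trace (Qᵀ * M) = ∑ √λ
  have hMU : ∀ i k, (M * Uu) i k = (M *ᵥ ⇑(u k)) i := by
    intro i k
    simp [Matrix.mul_apply, mulVec, dotProduct, hUu]
  have htrQ : trace (Qᵀ * M) = ∑ k, Real.sqrt (lam k) := by
    have e1 : Qᵀ * M = Uu * (Bᵀ * M) := by
      rw [hQ, transpose_mul, transpose_transpose, Matrix.mul_assoc]
    rw [e1, trace_mul_comm, Matrix.mul_assoc]
    rw [trace]
    congr 1
    funext k
    have : (Bᵀ * (M * Uu)) k k = ∑ i, b k i * (M *ᵥ ⇑(u k)) i := by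
      simp [Matrix.mul_apply, hMU, hB]
    rw [diag, this]
    have : ∀ i, (M *ᵥ ⇑(u k)) i = Real.sqrt (lam k) * b k i := by
      intro i; rw [hMb]; simp [Pi.smul_apply]
    simp only [this]
    have h1 : (∑ i, b k i * b k i) = (1:ℝ) := by
      have h := hbdot k k
      rw [if_pos rfl] at h
      simpa [dotProduct] using h
    calc ∑ i, b k i * (Real.sqrt (lam k) * b k i)
        = Real.sqrt (lam k) * ∑ i, b k i * b k i := by rw [Finset.mul_sum]; congr 1; funext i; ring
      _ = Real.sqrt (lam k) := by rw [h1, mul_one]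
  -- trace (Mᴴ * M) = ∑ λ
  have htrH : trace (Mᴴ * M) = ∑ i, lam i := by
    conv_lhs => rw [hHer.spectral_theorem]
    rw [Unitary.conjStarAlgAut_apply, trace_mul_cycle]
    rw [Unitary.coe_star_mul_self, Matrix.one_mul, trace_diagonal]
    simp [hlam]
  -- projector facts
  have hPP : (W * Wᵀ) * (W * Wᵀ) = W * Wᵀ := by
    simp only [Matrix.mul_assoc]
    rw [← Matrix.mul_assoc Wᵀ W Wᵀ, hW, Matrix.one_mul]
  have hQQ : (V * Vᵀ) * (V * Vᵀ) = V * Vᵀ := by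
    simp only [Matrix.mul_assoc]
    rw [← Matrix.mul_assoc Vᵀ V Vᵀ, hV, Matrix.one_mul]
  have h1P : (1 - V*Vᵀ) * (1 - V*Vᵀ) = 1 - V*Vᵀ := by
    rw [mul_sub, Matrix.mul_one, sub_mul, Matrix.one_mul, hQQ, sub_self, sub_zero]
  have hA : (W * Wᵀ * (1 - V * Vᵀ))ᵀ = (1 - V * Vᵀ) * (W * Wᵀ) := by
    rw [transpose_mul, transpose_sub, transpose_one, transpose_mul, transpose_mul,
      transpose_transpose, transpose_transpose]
  have t2 : trace ((W*Wᵀ) * (V*Vᵀ)) = trace ((Wᵀ*V) * (Vᵀ*W)) := by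
    rw [trace_mul_comm, trace_mul_comm (Wᵀ*V)]
    simp only [Matrix.mul_assoc]
    rw [trace_mul_comm]
    simp only [Matrix.mul_assoc]
  have htrE2 : trace ((W*Wᵀ*(1 - V*Vᵀ))ᵀ * (W*Wᵀ*(1 - V*Vᵀ))) = (r:ℝ) - ∑ i, lam i := by
    rw [hA]
    have e : ((1 - V*Vᵀ) * (W*Wᵀ)) * ((W*Wᵀ)*(1 - V*Vᵀ))
        = (1 - V*Vᵀ) * ((W*Wᵀ) * (1 - V*Vᵀ)) := by
      rw [Matrix.mul_assoc, ← Matrix.mul_assoc (W*Wᵀ), hPP]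
    rw [e, trace_mul_comm, Matrix.mul_assoc, h1P]
    rw [mul_sub, Matrix.mul_one, trace_sub]
    have tA : trace (W*Wᵀ) = (r:ℝ) := by
      rw [trace_mul_comm, hW, trace_one]; simp
    have tB : trace ((W*Wᵀ) * (V*Vᵀ)) = ∑ i, lam i := by
      rw [t2, ← htrH, hMt, hM, transpose_mul, transpose_transpose]
    rw [tA, tB]
  have htrE1 : trace ((W - V*Q)ᵀ * (W - V*Q)) = 2*(r:ℝ) - 2*∑ k, Real.sqrt (lam k) := by
    have e : (W - V*Q)ᵀ * (W - V*Q)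
        = Wᵀ*W - Wᵀ*(V*Q) - ((V*Q)ᵀ*W - (V*Q)ᵀ*(V*Q)) := by
      rw [transpose_sub, Matrix.sub_mul, Matrix.mul_sub, Matrix.mul_sub]
    rw [e, trace_sub, trace_sub, trace_sub]
    have a1 : trace (Wᵀ*W) = (r:ℝ) := by rw [hW, trace_one]; simp
    have a4 : (V*Q)ᵀ*(V*Q) = 1 := by
      rw [transpose_mul, Matrix.mul_assoc, ← Matrix.mul_assoc Vᵀ V Q, hV, Matrix.one_mul]
      exact hQ1
    have a3 : trace ((V*Q)ᵀ*W) = ∑ k, Real.sqrt (lam k) := by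
      rw [transpose_mul, Matrix.mul_assoc, ← hM, htrQ]
    have a2 : trace (Wᵀ*(V*Q)) = ∑ k, Real.sqrt (lam k) := by
      rw [← trace_transpose, transpose_mul, transpose_mul, transpose_transpose,
        Matrix.mul_assoc, ← hM, htrQ]
    rw [a1, a2, a3, a4, trace_one]
    simp only [Fintype.card_fin]
    ring
  rw [frob_eq_trace, frob_eq_trace, htrE1, htrE2,
    ← Real.sqrt_mul (by norm_num : (0:ℝ) ≤ 2)]
  apply Real.sqrt_le_sqrt
  have hsum : ∑ i, lam i ≤ ∑ i, Real.sqrt (lam i) :=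
    Finset.sum_le_sum fun i _ => by
      nlinarith [Real.sqrt_nonneg (lam i), Real.sq_sqrt (hnn i), Real.sqrt_le_one.mpr (hle1 i)]
  linarith
end

section
/- Let Φ, Ψ ∈ ℝ^{n×n} be symmetric matrices, let a ≤ b be real numbers and δ > 0. Let W ∈ 𝕍_{n,r₁} and μ₁, …, μ_{r₁} ∈ [a, b] satisfy Φ W = W · diag(μ₁, …, μ_{r₁}) (i.e., the columns of W are orthonormal eigenvectors of Φ with eigenvalues in the interval S₁ = [a, b]). Let Ψ = U · diag(ψ₁, …, ψₙ) · Uᵀ with U an n×n orthogonal matrix, and let P = Σ_{i : a−δ < ψᵢ < b+δ} uᵢ uᵢᵀ be the orthogonal projector onto the span of those columns uᵢ of U whose eigenvalue ψᵢ is NOT contained in S₂ = ℝ \ (a − δ, b + δ). Then ‖W Wᵀ (I − P)‖₂ ≤ ‖Φ − Ψ‖₂ / δ. -/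
open Matrix

/-- The spectral norm (largest singular value) of a real matrix, as the operator norm of
the induced linear map between Euclidean spaces. -/
noncomputable def specNorm {m r : ℕ} (M : Matrix (Fin m) (Fin r) ℝ) : ℝ :=
  ‖LinearMap.toContinuousLinearMap (Matrix.toEuclideanLin M)‖

section DKhelpers
open scoped Matrix.Norms.L2Operator

lemma specNorm_eq_l2 {m r : ℕ} (M : Matrix (Fin m) (Fin r) ℝ) : specNorm M = ‖M‖ := rfl

lemma l2_norm_diagonal_le {r : ℕ} (d : Fin r → ℝ) (K : ℝ) (hK : 0 ≤ K) (h : ∀ i, |d i| ≤ K) :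
    ‖(diagonal d : Matrix (Fin r) (Fin r) ℝ)‖ ≤ K := by
  rw [Matrix.l2_opNorm_def]
  apply ContinuousLinearMap.opNorm_le_bound _ hK
  intro x
  simp only [LinearEquiv.trans_apply, LinearMap.coe_toContinuousLinearMap']
  rw [Matrix.toEuclideanLin_apply]
  rw [EuclideanSpace.norm_eq, EuclideanSpace.norm_eq]
  have key : ∑ i, ‖(WithLp.equiv 2 (Fin r → ℝ)).symm (diagonal d *ᵥ (WithLp.equiv 2 (Fin r → ℝ)) x) i‖ ^ 2
      ≤ K ^ 2 * ∑ i, ‖x i‖ ^ 2 := by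
    rw [Finset.mul_sum]
    apply Finset.sum_le_sum
    intro i _
    have hxi : (WithLp.equiv 2 (Fin r → ℝ)).symm (diagonal d *ᵥ (WithLp.equiv 2 (Fin r → ℝ)) x) i
        = d i * x i := by
      simp [Matrix.mulVec_diagonal]
    rw [hxi]
    have := h i
    have hx : ‖x i‖ = |x i| := rfl
    rw [Real.norm_eq_abs, hx]
    rw [abs_mul]
    rw [mul_pow]
    exact mul_le_mul_of_nonneg_right (pow_le_pow_left₀ (abs_nonneg _) this 2) (sq_nonneg _)
  calc Real.sqrt (∑ i, ‖(WithLp.equiv 2 (Fin r → ℝ)).symm (diagonal d *ᵥ (WithLp.equiv 2 (Fin r → ℝ)) x) i‖ ^ 2)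
      ≤ Real.sqrt (K ^ 2 * ∑ i, ‖x i‖ ^ 2) := Real.sqrt_le_sqrt key
    _ = K * Real.sqrt (∑ i, ‖x i‖ ^ 2) := by
        rw [Real.sqrt_mul (sq_nonneg K), Real.sqrt_sq hK]

lemma l2_norm_one_le {r : ℕ} : ‖(1 : Matrix (Fin r) (Fin r) ℝ)‖ ≤ 1 := by
  rw [← Matrix.diagonal_one]
  exact l2_norm_diagonal_le _ 1 zero_le_one (fun i => by simp)

lemma l2_norm_le_one_of_iso {m r : ℕ} (A : Matrix (Fin m) (Fin r) ℝ) (h : Aᵀ * A = 1) :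
    ‖A‖ ≤ 1 := by
  have h2 : ‖A‖ * ‖A‖ ≤ 1 := by
    rw [← Matrix.l2_opNorm_conjTranspose_mul_self, A.conjTranspose_eq_transpose_of_trivial, h]
    exact l2_norm_one_le
  nlinarith [norm_nonneg A]

lemma l2_norm_mul_le_of_left {p q s : ℕ} (A : Matrix (Fin p) (Fin q) ℝ)
    (B : Matrix (Fin q) (Fin s) ℝ) (h : ‖A‖ ≤ 1) : ‖A * B‖ ≤ ‖B‖ :=
  le_trans (Matrix.l2_opNorm_mul A B) (by nlinarith [norm_nonneg A, norm_nonneg B])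

lemma l2_norm_mul_le_of_right {p q s : ℕ} (A : Matrix (Fin p) (Fin q) ℝ)
    (B : Matrix (Fin q) (Fin s) ℝ) (h : ‖B‖ ≤ 1) : ‖A * B‖ ≤ ‖A‖ :=
  le_trans (Matrix.l2_opNorm_mul A B) (by nlinarith [norm_nonneg A, norm_nonneg B])

lemma l2_norm_transpose {p q : ℕ} (A : Matrix (Fin p) (Fin q) ℝ) : ‖Aᵀ‖ = ‖A‖ := by
  rw [← A.conjTranspose_eq_transpose_of_trivial, Matrix.l2_opNorm_conjTranspose]

lemma diagonal_sub_smul_one {k : ℕ} (d : Fin k → ℝ) (c : ℝ) :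
    diagonal (fun i => d i - c) = diagonal d - c • (1 : Matrix (Fin k) (Fin k) ℝ) := by
  ext i j
  by_cases hij : i = j
  · subst hij
    simp [Matrix.sub_apply, Matrix.smul_apply, Matrix.diagonal_apply_eq, Matrix.one_apply_eq]
  · simp [Matrix.sub_apply, Matrix.smul_apply, Matrix.diagonal_apply_ne _ hij,
      Matrix.one_apply_ne hij]

end DKhelpers

section DKmain
open scoped Matrix.Norms.L2Operator

/-- Davis–Kahan theorem (Bhatia's form), spectral norm version.
`S₁ = [a,b]`, `S₂ = ℝ \ (a−δ, b+δ)`; `W` holds orthonormal eigenvectors of `Φ` with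
eigenvalues in `S₁`, and `P` projects onto the span of eigenvectors of `Ψ` whose
eigenvalues are not in `S₂`. Then `‖W Wᵀ (I − P)‖₂ ≤ ‖Φ − Ψ‖₂ / δ`. -/
theorem stmt_6 (n r₁ : ℕ) (Φ Ψ : Matrix (Fin n) (Fin n) ℝ)
    (hΦsymm : Φ.IsSymm) (hΨsymm : Ψ.IsSymm)
    (a b δ : ℝ) (hab : a ≤ b) (hδ : 0 < δ)
    (W : Matrix (Fin n) (Fin r₁) ℝ) (hW : Wᵀ * W = 1)
    (μ : Fin r₁ → ℝ) (hμ : ∀ i, μ i ∈ Set.Icc a b)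
    (hΦW : Φ * W = W * Matrix.diagonal μ)
    (U : Matrix (Fin n) (Fin n) ℝ) (hU : Uᵀ * U = 1 ∧ U * Uᵀ = 1)
    (ψ : Fin n → ℝ) (hΨU : Ψ = U * Matrix.diagonal ψ * Uᵀ)
    (P : Matrix (Fin n) (Fin n) ℝ)
    (hP : P = ∑ i ∈ Finset.univ.filter (fun i => a - δ < ψ i ∧ ψ i < b + δ),
        Matrix.vecMulVec (fun k => U k i) (fun k => U k i)) :
    specNorm (W * Wᵀ * (1 - P)) ≤ specNorm (Φ - Ψ) / δ := by
  classical
  set c : ℝ := (a + b) / 2 with hc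
  set ρ : ℝ := (b - a) / 2 with hρdef
  have hρ : 0 ≤ ρ := by rw [hρdef]; linarith
  have hpd : 0 < ρ + δ := by linarith
  set χ : Fin n → ℝ := fun i => if a - δ < ψ i ∧ ψ i < b + δ then 0 else 1 with hχ
  set ψ' : Fin n → ℝ := fun i => if a - δ < ψ i ∧ ψ i < b + δ then b + δ else ψ i with hψ'
  set g : Fin n → ℝ := fun i => (ψ' i - c)⁻¹ with hgdef
  -- separation
  have hsep : ∀ i, ρ + δ ≤ |ψ' i - c| := by
    intro i
    by_cases hi : a - δ < ψ i ∧ ψ i < b + δ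
    · have : ψ' i = b + δ := by simp [hψ', hi]
      rw [this]
      have h1 : ρ + δ = b + δ - c := by rw [hρdef, hc]; ring
      rw [h1]
      exact le_abs_self _
    · have hpsi : ψ' i = ψ i := by simp [hψ', hi]
      rw [hpsi]
      push_neg at hi
      rcases le_or_gt (ψ i) (a - δ) with h1 | h1
      · have : ρ + δ ≤ c - ψ i := by rw [hρdef, hc]; linarith
        calc ρ + δ ≤ c - ψ i := this
          _ = -(ψ i - c) := by ring
          _ ≤ |ψ i - c| := neg_le_abs _
      · have h2 : b + δ ≤ ψ i := hi h1
        have : ρ + δ ≤ ψ i - c := by rw [hρdef, hc]; linarith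
        exact this.trans (le_abs_self _)
  have hsep0 : ∀ i, ψ' i - c ≠ 0 := by
    intro i h0
    have := hsep i
    rw [h0, abs_zero] at this
    linarith
  -- P in terms of U
  have hPU : P = U * diagonal (fun i => 1 - χ i) * Uᵀ := by
    rw [hP]
    ext k l
    rw [Matrix.sum_apply]
    have hrhs : (U * diagonal (fun i => 1 - χ i) * Uᵀ) k l
        = ∑ j, U k j * (1 - χ j) * U l j := by
      rw [Matrix.mul_apply]
      apply Finset.sum_congr rfl
      intro j _
      rw [Matrix.mul_diagonal, Matrix.transpose_apply]
    rw [hrhs, Finset.sum_filter]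
    apply Finset.sum_congr rfl
    intro j _
    by_cases hj : a - δ < ψ j ∧ ψ j < b + δ
    · simp [hχ, hj, Matrix.vecMulVec_apply]
    · simp [hχ, hj, Matrix.vecMulVec_apply]
  have hQ : (1 : Matrix (Fin n) (Fin n) ℝ) - P = U * diagonal χ * Uᵀ := by
    have hadd : diagonal (fun i => 1 - χ i) + diagonal χ = (1 : Matrix (Fin n) (Fin n) ℝ) := by
      ext i j
      by_cases hij : i = j
      · subst hij
        simp [Matrix.add_apply, Matrix.diagonal_apply_eq, Matrix.one_apply_eq]
      · simp [Matrix.add_apply, Matrix.diagonal_apply_ne _ hij, Matrix.one_apply_ne hij]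
    have hsum : P + U * diagonal χ * Uᵀ = 1 := by
      rw [hPU, ← Matrix.add_mul, ← Matrix.mul_add, hadd, Matrix.mul_one, hU.2]
    rw [sub_eq_iff_eq_add, ← hsum]
    abel
  set X : Matrix (Fin n) (Fin r₁) ℝ := diagonal χ * (Uᵀ * W) with hX
  set E : Matrix (Fin n) (Fin r₁) ℝ := Uᵀ * ((1 - P) * ((Ψ - Φ) * W)) with hEdef
  -- the Sylvester relation
  have h1 : Uᵀ * Ψ = diagonal ψ * Uᵀ := by
    rw [hΨU, ← Matrix.mul_assoc, ← Matrix.mul_assoc, hU.1, Matrix.one_mul]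
  have h2 : diagonal χ * diagonal ψ = diagonal ψ' * diagonal χ := by
    have hfun : (fun i => χ i * ψ i) = fun i => ψ' i * χ i := by
      funext i
      by_cases hi : a - δ < ψ i ∧ ψ i < b + δ
      · simp [hχ, hi]
      · simp [hχ, hψ', hi, mul_comm]
    calc diagonal χ * diagonal ψ = diagonal fun i => χ i * ψ i :=
          Matrix.diagonal_mul_diagonal _ _
      _ = diagonal fun i => ψ' i * χ i := by rw [hfun]
      _ = diagonal ψ' * diagonal χ := (Matrix.diagonal_mul_diagonal _ _).symm
  have hE : E = diagonal ψ' * X - X * diagonal μ := by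
    rw [hEdef, hQ]
    calc Uᵀ * (U * diagonal χ * Uᵀ * ((Ψ - Φ) * W))
        = (Uᵀ * U) * (diagonal χ * (Uᵀ * ((Ψ - Φ) * W))) := by
          simp only [Matrix.mul_assoc]
      _ = diagonal χ * (Uᵀ * ((Ψ - Φ) * W)) := by rw [hU.1, Matrix.one_mul]
      _ = diagonal χ * ((Uᵀ * Ψ) * W - Uᵀ * (Φ * W)) := by
          rw [Matrix.sub_mul, Matrix.mul_sub, Matrix.mul_assoc]
      _ = diagonal χ * (diagonal ψ * (Uᵀ * W)) - diagonal χ * (Uᵀ * (W * diagonal μ)) := by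
          rw [h1, Matrix.mul_sub, Matrix.mul_assoc, hΦW]
      _ = (diagonal χ * diagonal ψ) * (Uᵀ * W) - (diagonal χ * (Uᵀ * W)) * diagonal μ := by
          simp only [Matrix.mul_assoc]
      _ = diagonal ψ' * X - X * diagonal μ := by
          rw [h2, hX, Matrix.mul_assoc]
  have hginv : diagonal g * diagonal (fun i => ψ' i - c) = (1 : Matrix (Fin n) (Fin n) ℝ) := by
    have hfun : (fun i => g i * (ψ' i - c)) = fun _ : Fin n => (1 : ℝ) :=
      funext fun i => inv_mul_cancel₀ (hsep0 i)
    calc diagonal g * diagonal (fun i => ψ' i - c)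
        = diagonal fun i => g i * (ψ' i - c) := Matrix.diagonal_mul_diagonal _ _
      _ = diagonal fun _ => (1 : ℝ) := by rw [hfun]
      _ = 1 := Matrix.diagonal_one
  have hXrep : X = diagonal g * (E + X * diagonal (fun j => μ j - c)) := by
    have e0 : diagonal (fun j => μ j - c) = diagonal μ - c • (1 : Matrix (Fin r₁) (Fin r₁) ℝ) :=
      diagonal_sub_smul_one μ c
    have e0' : diagonal (fun i => ψ' i - c) = diagonal ψ' - c • (1 : Matrix (Fin n) (Fin n) ℝ) :=
      diagonal_sub_smul_one ψ' c
    have hA : E + X * diagonal (fun j => μ j - c) = diagonal (fun i => ψ' i - c) * X := by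
      rw [hE, e0, e0']
      rw [Matrix.mul_sub, Matrix.sub_mul]
      rw [Matrix.mul_smul, Matrix.mul_one, Matrix.smul_mul, Matrix.one_mul]
      abel
    rw [hA, ← Matrix.mul_assoc, hginv, Matrix.one_mul]
  -- norm bounds
  have nW : ‖W‖ ≤ 1 := l2_norm_le_one_of_iso W hW
  have nU : ‖U‖ ≤ 1 := l2_norm_le_one_of_iso U hU.1
  have nUt : ‖Uᵀ‖ ≤ 1 := l2_norm_le_one_of_iso Uᵀ (by rw [Matrix.transpose_transpose, hU.2])
  have nχ : ‖(diagonal χ : Matrix (Fin n) (Fin n) ℝ)‖ ≤ 1 := by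
    apply l2_norm_diagonal_le _ 1 zero_le_one
    intro i
    by_cases hi : a - δ < ψ i ∧ ψ i < b + δ <;> simp [hχ, hi]
  have ng : ‖(diagonal g : Matrix (Fin n) (Fin n) ℝ)‖ ≤ (ρ + δ)⁻¹ := by
    apply l2_norm_diagonal_le _ _ (by positivity)
    intro i
    rw [hgdef, abs_inv]
    exact inv_anti₀ hpd (hsep i)
  have nμc : ‖(diagonal (fun j => μ j - c) : Matrix (Fin r₁) (Fin r₁) ℝ)‖ ≤ ρ := by
    apply l2_norm_diagonal_le _ _ hρ
    intro j
    have := hμ j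
    rw [Set.mem_Icc] at this
    rw [abs_le]
    constructor <;> [skip; skip] <;> (rw [hρdef, hc]; ) <;> [linarith [this.1]; linarith [this.2]]
  have nQ : ‖(1 : Matrix (Fin n) (Fin n) ℝ) - P‖ ≤ 1 := by
    rw [hQ]
    calc ‖U * diagonal χ * Uᵀ‖ ≤ ‖U * diagonal χ‖ := l2_norm_mul_le_of_right _ _ nUt
      _ ≤ ‖diagonal χ‖ := l2_norm_mul_le_of_left _ _ nU
      _ ≤ 1 := nχ
  have nE : ‖E‖ ≤ ‖Φ - Ψ‖ := by
    rw [hEdef]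
    calc ‖Uᵀ * ((1 - P) * ((Ψ - Φ) * W))‖ ≤ ‖(1 - P) * ((Ψ - Φ) * W)‖ :=
          l2_norm_mul_le_of_left _ _ nUt
      _ ≤ ‖(Ψ - Φ) * W‖ := l2_norm_mul_le_of_left _ _ nQ
      _ ≤ ‖Ψ - Φ‖ := l2_norm_mul_le_of_right _ _ nW
      _ = ‖Φ - Ψ‖ := norm_sub_rev _ _
  have nX1 : ‖X‖ * (ρ + δ) ≤ ‖E‖ + ‖X‖ * ρ := by
    have step : ‖X‖ ≤ (ρ + δ)⁻¹ * (‖E‖ + ‖X‖ * ρ) := by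
      calc ‖X‖ = ‖diagonal g * (E + X * diagonal (fun j => μ j - c))‖ := by rw [← hXrep]
        _ ≤ ‖(diagonal g : Matrix (Fin n) (Fin n) ℝ)‖ * ‖E + X * diagonal (fun j => μ j - c)‖ :=
            Matrix.l2_opNorm_mul _ _
        _ ≤ (ρ + δ)⁻¹ * (‖E‖ + ‖X‖ * ρ) := by
            apply mul_le_mul ng _ (norm_nonneg _) (by positivity)
            calc ‖E + X * diagonal (fun j => μ j - c)‖
                ≤ ‖E‖ + ‖X * diagonal (fun j => μ j - c)‖ := norm_add_le _ _
              _ ≤ ‖E‖ + ‖X‖ * ρ := by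
                  apply add_le_add_right
                  exact le_trans (Matrix.l2_opNorm_mul _ _)
                    (mul_le_mul_of_nonneg_left nμc (norm_nonneg _))
    rw [inv_mul_eq_div, le_div_iff₀ hpd] at step
    exact step
  have nXE : δ * ‖X‖ ≤ ‖E‖ := by nlinarith [norm_nonneg X]
  -- final assembly
  have hfinal : W * Wᵀ * (1 - P) = W * (Xᵀ * Uᵀ) := by
    rw [hQ, hX]
    rw [Matrix.transpose_mul, Matrix.transpose_mul, Matrix.transpose_transpose,
      Matrix.diagonal_transpose]
    simp only [Matrix.mul_assoc]
  rw [specNorm_eq_l2, specNorm_eq_l2, hfinal]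
  have : ‖W * (Xᵀ * Uᵀ)‖ ≤ ‖X‖ := by
    calc ‖W * (Xᵀ * Uᵀ)‖ ≤ ‖Xᵀ * Uᵀ‖ := l2_norm_mul_le_of_left _ _ nW
      _ ≤ ‖Xᵀ‖ := l2_norm_mul_le_of_right _ _ nUt
      _ = ‖X‖ := l2_norm_transpose _
  apply this.trans
  rw [le_div_iff₀ hδ]
  calc ‖X‖ * δ = δ * ‖X‖ := mul_comm _ _
    _ ≤ ‖E‖ := nXE
    _ ≤ ‖Φ - Ψ‖ := nE

end DKmain
end

section
/- Let N : ℝ^{n×n} → ℝ be a norm on n×n real matrices (N is subadditive, absolutely homogeneous, and N(X) = 0 iff X = 0) which is unitarily invariant, i.e., N(P X Q) = N(X) for all orthogonal P, Q ∈ O(n) and all X. Let Φ, Ψ ∈ ℝ^{n×n} be symmetric matrices, let a ≤ b be real numbers and δ > 0. Let W ∈ 𝕍_{n,r₁} and μ₁, …, μ_{r₁} ∈ [a, b] satisfy Φ W = W · diag(μ₁, …, μ_{r₁}). Let Ψ = U · diag(ψ₁, …, ψₙ) · Uᵀ with U an n×n orthogonal matrix, and let P = Σ_{i : a−δ < ψᵢ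 < b+δ} uᵢ uᵢᵀ be the orthogonal projector onto the span of those columns uᵢ of U whose eigenvalue ψᵢ is not contained in S₂ = ℝ \ (a − δ, b + δ). Then N(W Wᵀ (I − P)) ≤ N(Φ − Ψ) / δ. -/
open Matrix

section DK_aux

variable {n m : ℕ}
variable (N : Matrix (Fin n) (Fin n) ℝ → ℝ)

/-- Multiplying on the left by an orthogonal matrix preserves N. -/
lemma dk_left_orth
    (hN_inv : ∀ (P' Q' X : Matrix (Fin n) (Fin n) ℝ),
      (P'ᵀ * P' = 1 ∧ P' * P'ᵀ = 1) → (Q'ᵀ * Q' = 1 ∧ Q' * Q'ᵀ = 1) →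
      N (P' * X * Q') = N X)
    (O Z : Matrix (Fin n) (Fin n) ℝ) (hO : Oᵀ * O = 1 ∧ O * Oᵀ = 1) :
    N (O * Z) = N Z := by
  have := hN_inv O 1 Z hO ⟨by simp, by simp⟩
  simpa using this

lemma dk_right_orth
    (hN_inv : ∀ (P' Q' X : Matrix (Fin n) (Fin n) ℝ),
      (P'ᵀ * P' = 1 ∧ P' * P'ᵀ = 1) → (Q'ᵀ * Q' = 1 ∧ Q' * Q'ᵀ = 1) →
      N (P' * X * Q') = N X)
    (O Z : Matrix (Fin n) (Fin n) ℝ) (hO : Oᵀ * O = 1 ∧ O * Oᵀ = 1) :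
    N (Z * O) = N Z := by
  have := hN_inv 1 O Z ⟨by simp, by simp⟩ hO
  simpa using this

/-- convex combination bound -/
lemma dk_comb
    (hN_add : ∀ X Y, N (X + Y) ≤ N X + N Y)
    (hN_smul : ∀ (c : ℝ) (X), N (c • X) = |c| * N X)
    (u v : ℝ) (X Y : Matrix (Fin n) (Fin n) ℝ) :
    N (u • X + v • Y) ≤ |u| * N X + |v| * N Y := by
  refine le_trans (hN_add _ _) ?_
  rw [hN_smul, hN_smul]

/-- multiplying on the left by a symmetric idempotent does not increase N -/
lemma dk_proj_left
    (hN_add : ∀ X Y, N (X + Y) ≤ N X + N Y)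
    (hN_smul : ∀ (c : ℝ) (X), N (c • X) = |c| * N X)
    (hN_inv : ∀ (P' Q' X : Matrix (Fin n) (Fin n) ℝ),
      (P'ᵀ * P' = 1 ∧ P' * P'ᵀ = 1) → (Q'ᵀ * Q' = 1 ∧ Q' * Q'ᵀ = 1) →
      N (P' * X * Q') = N X)
    (Q X : Matrix (Fin n) (Fin n) ℝ) (hQt : Qᵀ = Q) (hQQ : Q * Q = Q) :
    N (Q * X) ≤ N X := by
  set S : Matrix (Fin n) (Fin n) ℝ := Q + Q - 1 with hS
  have hSt : Sᵀ = S := by simp [hS, hQt]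
  have hSS : S * S = 1 := by
    rw [hS, Matrix.sub_mul, Matrix.add_mul, Matrix.mul_sub, Matrix.mul_sub,
      Matrix.mul_add, Matrix.mul_add, hQQ]
    simp only [Matrix.one_mul, Matrix.mul_one]
    abel
  have hQX : Q * X = (2⁻¹ : ℝ) • (S * X) + (2⁻¹ : ℝ) • X := by
    rw [hS, Matrix.sub_mul, Matrix.add_mul, Matrix.one_mul]
    module
  rw [hQX]
  have h1 := dk_comb N hN_add hN_smul (2⁻¹ : ℝ) (2⁻¹ : ℝ) (S * X) X
  have h2 : N (S * X) = N X := dk_left_orth N hN_inv S X ⟨by rw [hSt, hSS], by rw [hSt, hSS]⟩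
  rw [h2] at h1
  refine le_trans h1 (le_of_eq ?_)
  rw [abs_of_nonneg (by norm_num : (0:ℝ) ≤ 2⁻¹)]
  ring

lemma dk_proj_right
    (hN_add : ∀ X Y, N (X + Y) ≤ N X + N Y)
    (hN_smul : ∀ (c : ℝ) (X), N (c • X) = |c| * N X)
    (hN_inv : ∀ (P' Q' X : Matrix (Fin n) (Fin n) ℝ),
      (P'ᵀ * P' = 1 ∧ P' * P'ᵀ = 1) → (Q'ᵀ * Q' = 1 ∧ Q' * Q'ᵀ = 1) →
      N (P' * X * Q') = N X)
    (Q X : Matrix (Fin n) (Fin n) ℝ) (hQt : Qᵀ = Q) (hQQ : Q * Q = Q) :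
    N (X * Q) ≤ N X := by
  set S : Matrix (Fin n) (Fin n) ℝ := Q + Q - 1 with hS
  have hSt : Sᵀ = S := by simp [hS, hQt]
  have hSS : S * S = 1 := by
    rw [hS, Matrix.sub_mul, Matrix.add_mul, Matrix.mul_sub, Matrix.mul_sub,
      Matrix.mul_add, Matrix.mul_add, hQQ]
    simp only [Matrix.one_mul, Matrix.mul_one]
    abel
  have hQX : X * Q = (2⁻¹ : ℝ) • (X * S) + (2⁻¹ : ℝ) • X := by
    rw [hS, Matrix.mul_sub, Matrix.mul_add, Matrix.mul_one]
    module
  rw [hQX]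
  have h1 := dk_comb N hN_add hN_smul (2⁻¹ : ℝ) (2⁻¹ : ℝ) (X * S) X
  have h2 : N (X * S) = N X := dk_right_orth N hN_inv S X ⟨by rw [hSt, hSS], by rw [hSt, hSS]⟩
  rw [h2] at h1
  refine le_trans h1 (le_of_eq ?_)
  rw [abs_of_nonneg (by norm_num : (0:ℝ) ≤ 2⁻¹)]
  ring


/-- sign diagonal sandwich: base case -/
lemma dk_contract_left_sign
    (hN_add : ∀ X Y, N (X + Y) ≤ N X + N Y)
    (hN_smul : ∀ (c : ℝ) (X), N (c • X) = |c| * N X)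
    (hN_inv : ∀ (P' Q' X : Matrix (Fin n) (Fin n) ℝ),
      (P'ᵀ * P' = 1 ∧ P' * P'ᵀ = 1) → (Q'ᵀ * Q' = 1 ∧ Q' * Q'ᵀ = 1) →
      N (P' * X * Q') = N X)
    (V : Matrix (Fin n) (Fin m) ℝ) (hV : Vᵀ * V = 1)
    (d : Fin m → ℝ) (hd : ∀ i, d i = 1 ∨ d i = -1)
    (Z : Matrix (Fin n) (Fin n) ℝ) :
    N (V * (diagonal d * (Vᵀ * Z))) ≤ N Z := by
  have hVV : ∀ X : Matrix (Fin m) (Fin n) ℝ, Vᵀ * (V * X) = X := by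
    intro X; rw [← Matrix.mul_assoc, hV, Matrix.one_mul]
  have hdd : diagonal d * diagonal d = (1 : Matrix (Fin m) (Fin m) ℝ) := by
    rw [diagonal_mul_diagonal]
    have : (fun i => d i * d i) = fun _ => (1:ℝ) := by
      funext i; rcases hd i with h | h <;> simp [h]
    rw [this, diagonal_one]
  set Q : Matrix (Fin n) (Fin n) ℝ := V * Vᵀ with hQdef
  set J : Matrix (Fin n) (Fin n) ℝ := V * (diagonal d * Vᵀ) with hJdef
  have hQt : Qᵀ = Q := by simp [hQdef]
  have hQQ : Q * Q = Q := by
    rw [hQdef]; rw [Matrix.mul_assoc]; rw [hVV]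
  have hJt : Jᵀ = J := by
    simp [hJdef, Matrix.transpose_mul, Matrix.mul_assoc]
  have hJJ : J * J = Q := by
    calc J * J = V * (diagonal d * (Vᵀ * (V * (diagonal d * Vᵀ)))) := by
          simp only [hJdef, Matrix.mul_assoc]
      _ = V * (diagonal d * (diagonal d * Vᵀ)) := by rw [hVV]
      _ = V * (diagonal d * diagonal d * Vᵀ) := by rw [Matrix.mul_assoc]
      _ = Q := by rw [hdd, Matrix.one_mul]
  have hJQ : J * Q = J := by
    calc J * Q = V * (diagonal d * (Vᵀ * (V * Vᵀ))) := by
          simp only [hJdef, hQdef, Matrix.mul_assoc]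
      _ = J := by rw [hVV]
  have hQJ : Q * J = J := by
    calc Q * J = V * (Vᵀ * (V * (diagonal d * Vᵀ))) := by
          simp only [hJdef, hQdef, Matrix.mul_assoc]
      _ = J := by rw [hVV]
  set O : Matrix (Fin n) (Fin n) ℝ := J + (1 - Q) with hOdef
  have hOt : Oᵀ = O := by simp [hOdef, hJt, hQt]
  have hOO : O * O = 1 := by
    rw [hOdef, Matrix.add_mul, Matrix.mul_add, Matrix.mul_add, Matrix.sub_mul,
      Matrix.mul_sub, Matrix.mul_sub, hJJ, hJQ, hQJ]
    simp only [Matrix.one_mul, Matrix.mul_one, Matrix.sub_mul, hQQ]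
    abel
  have hQO : Q * O = J := by
    rw [hOdef, Matrix.mul_add, Matrix.mul_sub, hQJ, hQQ, Matrix.mul_one]
    abel
  have key : V * (diagonal d * (Vᵀ * Z)) = Q * (O * Z) := by
    rw [← Matrix.mul_assoc Q O Z, hQO]
    simp only [hJdef, Matrix.mul_assoc]
  rw [key]
  refine le_trans (dk_proj_left N hN_add hN_smul hN_inv Q (O * Z) hQt hQQ) ?_
  exact le_of_eq (dk_left_orth N hN_inv O Z ⟨by rw [hOt, hOO], by rw [hOt, hOO]⟩)

lemma dk_contract_right_sign
    (hN_add : ∀ X Y, N (X + Y) ≤ N X + N Y)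
    (hN_smul : ∀ (c : ℝ) (X), N (c • X) = |c| * N X)
    (hN_inv : ∀ (P' Q' X : Matrix (Fin n) (Fin n) ℝ),
      (P'ᵀ * P' = 1 ∧ P' * P'ᵀ = 1) → (Q'ᵀ * Q' = 1 ∧ Q' * Q'ᵀ = 1) →
      N (P' * X * Q') = N X)
    (V : Matrix (Fin n) (Fin m) ℝ) (hV : Vᵀ * V = 1)
    (d : Fin m → ℝ) (hd : ∀ i, d i = 1 ∨ d i = -1)
    (Z : Matrix (Fin n) (Fin n) ℝ) :
    N (Z * (V * (diagonal d * Vᵀ))) ≤ N Z := by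
  have hVV : ∀ X : Matrix (Fin m) (Fin n) ℝ, Vᵀ * (V * X) = X := by
    intro X; rw [← Matrix.mul_assoc, hV, Matrix.one_mul]
  have hdd : diagonal d * diagonal d = (1 : Matrix (Fin m) (Fin m) ℝ) := by
    rw [diagonal_mul_diagonal]
    have : (fun i => d i * d i) = fun _ => (1:ℝ) := by
      funext i; rcases hd i with h | h <;> simp [h]
    rw [this, diagonal_one]
  set Q : Matrix (Fin n) (Fin n) ℝ := V * Vᵀ with hQdef
  set J : Matrix (Fin n) (Fin n) ℝ := V * (diagonal d * Vᵀ) with hJdef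
  have hQt : Qᵀ = Q := by simp [hQdef]
  have hQQ : Q * Q = Q := by
    rw [hQdef]; rw [Matrix.mul_assoc]; rw [hVV]
  have hJt : Jᵀ = J := by
    simp [hJdef, Matrix.transpose_mul, Matrix.mul_assoc]
  have hJJ : J * J = Q := by
    calc J * J = V * (diagonal d * (Vᵀ * (V * (diagonal d * Vᵀ)))) := by
          simp only [hJdef, Matrix.mul_assoc]
      _ = V * (diagonal d * (diagonal d * Vᵀ)) := by rw [hVV]
      _ = V * (diagonal d * diagonal d * Vᵀ) := by rw [Matrix.mul_assoc]
      _ = Q := by rw [hdd, Matrix.one_mul]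
  have hJQ : J * Q = J := by
    calc J * Q = V * (diagonal d * (Vᵀ * (V * Vᵀ))) := by
          simp only [hJdef, hQdef, Matrix.mul_assoc]
      _ = J := by rw [hVV]
  have hQJ : Q * J = J := by
    calc Q * J = V * (Vᵀ * (V * (diagonal d * Vᵀ))) := by
          simp only [hJdef, hQdef, Matrix.mul_assoc]
      _ = J := by rw [hVV]
  set O : Matrix (Fin n) (Fin n) ℝ := J + (1 - Q) with hOdef
  have hOt : Oᵀ = O := by simp [hOdef, hJt, hQt]
  have hOO : O * O = 1 := by
    rw [hOdef, Matrix.add_mul, Matrix.mul_add, Matrix.mul_add, Matrix.sub_mul,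
      Matrix.mul_sub, Matrix.mul_sub, hJJ, hJQ, hQJ]
    simp only [Matrix.one_mul, Matrix.mul_one, Matrix.sub_mul, hQQ]
    abel
  have hOQ : O * Q = J := by
    rw [hOdef, Matrix.add_mul, Matrix.sub_mul, hJQ, hQQ, Matrix.one_mul]
    abel
  have key : Z * (V * (diagonal d * Vᵀ)) = (Z * O) * Q := by
    rw [Matrix.mul_assoc, hOQ]
  rw [key]
  refine le_trans (dk_proj_right N hN_add hN_smul hN_inv Q (Z * O) hQt hQQ) ?_
  exact le_of_eq (dk_right_orth N hN_inv O Z ⟨by rw [hOt, hOO], by rw [hOt, hOO]⟩)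


lemma dk_contract_left
    (hN_add : ∀ X Y, N (X + Y) ≤ N X + N Y)
    (hN_smul : ∀ (c : ℝ) (X), N (c • X) = |c| * N X)
    (hN_inv : ∀ (P' Q' X : Matrix (Fin n) (Fin n) ℝ),
      (P'ᵀ * P' = 1 ∧ P' * P'ᵀ = 1) → (Q'ᵀ * Q' = 1 ∧ Q' * Q'ᵀ = 1) →
      N (P' * X * Q') = N X)
    (V : Matrix (Fin n) (Fin m) ℝ) (hV : Vᵀ * V = 1)
    (Z : Matrix (Fin n) (Fin n) ℝ)
    (d : Fin m → ℝ) (hd : ∀ i, |d i| ≤ 1) :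
    N (V * (diagonal d * (Vᵀ * Z))) ≤ N Z := by
  classical
  suffices h : ∀ (s : Finset (Fin m)) (d : Fin m → ℝ), (∀ i, |d i| ≤ 1) →
      (∀ i ∉ s, d i = 1 ∨ d i = -1) → N (V * (diagonal d * (Vᵀ * Z))) ≤ N Z by
    exact h Finset.univ d hd (fun i hi => absurd (Finset.mem_univ i) hi)
  intro s
  induction s using Finset.induction_on with
  | empty =>
    intro d hd hd'
    exact dk_contract_left_sign N hN_add hN_smul hN_inv V hV d
      (fun i => hd' i (by simp)) Z
  | @insert a s' ha ih =>
    intro d hd hd'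
    set dP := Function.update d a 1 with hdP
    set dM := Function.update d a (-1) with hdM
    have hP1 : ∀ i, |dP i| ≤ 1 := by
      intro i; rw [hdP, Function.update_apply]
      split <;> simp [hd i]
    have hM1 : ∀ i, |dM i| ≤ 1 := by
      intro i; rw [hdM, Function.update_apply]
      split <;> simp [hd i]
    have hP2 : ∀ i ∉ s', dP i = 1 ∨ dP i = -1 := by
      intro i hi
      rcases eq_or_ne i a with rfl | hne
      · left; simp [hdP]
      · rw [hdP, Function.update_of_ne hne]
        exact hd' i (by simp [Finset.mem_insert, hne, hi])
    have hM2 : ∀ i ∉ s', dM i = 1 ∨ dM i = -1 := by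
      intro i hi
      rcases eq_or_ne i a with rfl | hne
      · right; simp [hdM]
      · rw [hdM, Function.update_of_ne hne]
        exact hd' i (by simp [Finset.mem_insert, hne, hi])
    have hda := abs_le.mp (hd a)
    have key : diagonal d = ((1 + d a)/2) • diagonal dP + ((1 - d a)/2) • diagonal dM := by
      ext i j
      rcases eq_or_ne i j with rfl | hij
      · simp only [Matrix.add_apply, Matrix.smul_apply, Matrix.diagonal_apply_eq, smul_eq_mul]
        rcases eq_or_ne i a with rfl | hne
        · simp [hdP, hdM]; ring
        · simp [hdP, hdM, Function.update_of_ne hne]; ring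
      · simp [Matrix.diagonal_apply_ne _ hij]
    have expand : V * (diagonal d * (Vᵀ * Z))
        = ((1 + d a)/2) • (V * (diagonal dP * (Vᵀ * Z)))
          + ((1 - d a)/2) • (V * (diagonal dM * (Vᵀ * Z))) := by
      simp only [key, Matrix.add_mul, Matrix.mul_add, Matrix.smul_mul, Matrix.mul_smul]
    rw [expand]
    refine le_trans (dk_comb N hN_add hN_smul _ _ _ _) ?_
    rw [abs_of_nonneg (by linarith), abs_of_nonneg (by linarith)]
    have b1 := ih dP hP1 hP2
    have b2 := ih dM hM1 hM2
    nlinarith [b1, b2]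

lemma dk_contract_right
    (hN_add : ∀ X Y, N (X + Y) ≤ N X + N Y)
    (hN_smul : ∀ (c : ℝ) (X), N (c • X) = |c| * N X)
    (hN_inv : ∀ (P' Q' X : Matrix (Fin n) (Fin n) ℝ),
      (P'ᵀ * P' = 1 ∧ P' * P'ᵀ = 1) → (Q'ᵀ * Q' = 1 ∧ Q' * Q'ᵀ = 1) →
      N (P' * X * Q') = N X)
    (V : Matrix (Fin n) (Fin m) ℝ) (hV : Vᵀ * V = 1)
    (Z : Matrix (Fin n) (Fin n) ℝ)
    (d : Fin m → ℝ) (hd : ∀ i, |d i| ≤ 1) :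
    N (Z * (V * (diagonal d * Vᵀ))) ≤ N Z := by
  classical
  suffices h : ∀ (s : Finset (Fin m)) (d : Fin m → ℝ), (∀ i, |d i| ≤ 1) →
      (∀ i ∉ s, d i = 1 ∨ d i = -1) → N (Z * (V * (diagonal d * Vᵀ))) ≤ N Z by
    exact h Finset.univ d hd (fun i hi => absurd (Finset.mem_univ i) hi)
  intro s
  induction s using Finset.induction_on with
  | empty =>
    intro d hd hd'
    exact dk_contract_right_sign N hN_add hN_smul hN_inv V hV d
      (fun i => hd' i (by simp)) Z
  | @insert a s' ha ih =>
    intro d hd hd'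
    set dP := Function.update d a 1 with hdP
    set dM := Function.update d a (-1) with hdM
    have hP1 : ∀ i, |dP i| ≤ 1 := by
      intro i; rw [hdP, Function.update_apply]
      split <;> simp [hd i]
    have hM1 : ∀ i, |dM i| ≤ 1 := by
      intro i; rw [hdM, Function.update_apply]
      split <;> simp [hd i]
    have hP2 : ∀ i ∉ s', dP i = 1 ∨ dP i = -1 := by
      intro i hi
      rcases eq_or_ne i a with rfl | hne
      · left; simp [hdP]
      · rw [hdP, Function.update_of_ne hne]
        exact hd' i (by simp [Finset.mem_insert, hne, hi])
    have hM2 : ∀ i ∉ s', dM i = 1 ∨ dM i = -1 := by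
      intro i hi
      rcases eq_or_ne i a with rfl | hne
      · right; simp [hdM]
      · rw [hdM, Function.update_of_ne hne]
        exact hd' i (by simp [Finset.mem_insert, hne, hi])
    have hda := abs_le.mp (hd a)
    have key : diagonal d = ((1 + d a)/2) • diagonal dP + ((1 - d a)/2) • diagonal dM := by
      ext i j
      rcases eq_or_ne i j with rfl | hij
      · simp only [Matrix.add_apply, Matrix.smul_apply, Matrix.diagonal_apply_eq, smul_eq_mul]
        rcases eq_or_ne i a with rfl | hne
        · simp [hdP, hdM]; ring
        · simp [hdP, hdM, Function.update_of_ne hne]; ring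
      · simp [Matrix.diagonal_apply_ne _ hij]
    have expand : Z * (V * (diagonal d * Vᵀ))
        = ((1 + d a)/2) • (Z * (V * (diagonal dP * Vᵀ)))
          + ((1 - d a)/2) • (Z * (V * (diagonal dM * Vᵀ))) := by
      simp only [key, Matrix.add_mul, Matrix.mul_add, Matrix.smul_mul, Matrix.mul_smul]
    rw [expand]
    refine le_trans (dk_comb N hN_add hN_smul _ _ _ _) ?_
    rw [abs_of_nonneg (by linarith), abs_of_nonneg (by linarith)]
    have b1 := ih dP hP1 hP2
    have b2 := ih dM hM1 hM2
    nlinarith [b1, b2]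

lemma dk_contract_left_scaled
    (hN_add : ∀ X Y, N (X + Y) ≤ N X + N Y)
    (hN_smul : ∀ (c : ℝ) (X), N (c • X) = |c| * N X)
    (hN_zero : ∀ X, N X = 0 ↔ X = 0)
    (hN_inv : ∀ (P' Q' X : Matrix (Fin n) (Fin n) ℝ),
      (P'ᵀ * P' = 1 ∧ P' * P'ᵀ = 1) → (Q'ᵀ * Q' = 1 ∧ Q' * Q'ᵀ = 1) →
      N (P' * X * Q') = N X)
    (V : Matrix (Fin n) (Fin m) ℝ) (hV : Vᵀ * V = 1)
    (Z : Matrix (Fin n) (Fin n) ℝ)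
    (d : Fin m → ℝ) (m' : ℝ) (hm : 0 ≤ m') (hd : ∀ i, |d i| ≤ m') :
    N (V * (diagonal d * (Vᵀ * Z))) ≤ m' * N Z := by
  rcases eq_or_lt_of_le hm with h0 | h0
  · have hd0 : d = fun _ => (0:ℝ) := by
      funext i
      have := hd i; rw [← h0] at this
      exact abs_nonpos_iff.mp (by linarith [abs_nonneg (d i)])
    have hz : V * (diagonal d * (Vᵀ * Z)) = 0 := by rw [hd0, Matrix.diagonal_zero]; simp
    rw [hz, (hN_zero 0).mpr rfl, ← h0, zero_mul]
  · set d' : Fin m → ℝ := fun i => d i / m' with hd'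
    have hfun : d = m' • d' := by
      funext i
      simp only [hd', Pi.smul_apply, smul_eq_mul]
      field_simp
    have hdd : diagonal d = m' • diagonal d' := by
      rw [hfun, Matrix.diagonal_smul]
    have hbd : ∀ i, |d' i| ≤ 1 := by
      intro i
      rw [hd', abs_div, abs_of_pos h0, div_le_one h0]
      exact hd i
    rw [hdd, Matrix.smul_mul, Matrix.mul_smul, hN_smul, abs_of_pos h0]
    exact mul_le_mul_of_nonneg_left
      (dk_contract_left N hN_add hN_smul hN_inv V hV Z d' hbd) (le_of_lt h0)

lemma dk_contract_right_scaled
    (hN_add : ∀ X Y, N (X + Y) ≤ N X + N Y)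
    (hN_smul : ∀ (c : ℝ) (X), N (c • X) = |c| * N X)
    (hN_zero : ∀ X, N X = 0 ↔ X = 0)
    (hN_inv : ∀ (P' Q' X : Matrix (Fin n) (Fin n) ℝ),
      (P'ᵀ * P' = 1 ∧ P' * P'ᵀ = 1) → (Q'ᵀ * Q' = 1 ∧ Q' * Q'ᵀ = 1) →
      N (P' * X * Q') = N X)
    (V : Matrix (Fin n) (Fin m) ℝ) (hV : Vᵀ * V = 1)
    (Z : Matrix (Fin n) (Fin n) ℝ)
    (d : Fin m → ℝ) (m' : ℝ) (hm : 0 ≤ m') (hd : ∀ i, |d i| ≤ m') :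
    N (Z * (V * (diagonal d * Vᵀ))) ≤ m' * N Z := by
  rcases eq_or_lt_of_le hm with h0 | h0
  · have hd0 : d = fun _ => (0:ℝ) := by
      funext i
      have := hd i; rw [← h0] at this
      exact abs_nonpos_iff.mp (by linarith [abs_nonneg (d i)])
    have hz : Z * (V * (diagonal d * Vᵀ)) = 0 := by rw [hd0, Matrix.diagonal_zero]; simp
    rw [hz, (hN_zero 0).mpr rfl, ← h0, zero_mul]
  · set d' : Fin m → ℝ := fun i => d i / m' with hd'
    have hfun : d = m' • d' := by
      funext i
      simp only [hd', Pi.smul_apply, smul_eq_mul]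
      field_simp
    have hdd : diagonal d = m' • diagonal d' := by
      rw [hfun, Matrix.diagonal_smul]
    have hbd : ∀ i, |d' i| ≤ 1 := by
      intro i
      rw [hd', abs_div, abs_of_pos h0, div_le_one h0]
      exact hd i
    rw [hdd, Matrix.smul_mul, Matrix.mul_smul, Matrix.mul_smul, hN_smul, abs_of_pos h0]
    exact mul_le_mul_of_nonneg_left
      (dk_contract_right N hN_add hN_smul hN_inv V hV Z d' hbd) (le_of_lt h0)

end DK_aux


/-- Davis–Kahan theorem (Bhatia's form) for an arbitrary unitarily
invariant norm `N` on n×n real matrices. -/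
theorem stmt_7 (n r₁ : ℕ)
    (N : Matrix (Fin n) (Fin n) ℝ → ℝ)
    (hN_add : ∀ X Y, N (X + Y) ≤ N X + N Y)
    (hN_smul : ∀ (c : ℝ) (X), N (c • X) = |c| * N X)
    (hN_zero : ∀ X, N X = 0 ↔ X = 0)
    (hN_inv : ∀ (P' Q' X : Matrix (Fin n) (Fin n) ℝ),
      (P'ᵀ * P' = 1 ∧ P' * P'ᵀ = 1) → (Q'ᵀ * Q' = 1 ∧ Q' * Q'ᵀ = 1) →
      N (P' * X * Q') = N X)
    (Φ Ψ : Matrix (Fin n) (Fin n) ℝ)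
    (hΦsymm : Φ.IsSymm) (hΨsymm : Ψ.IsSymm)
    (a b δ : ℝ) (hab : a ≤ b) (hδ : 0 < δ)
    (W : Matrix (Fin n) (Fin r₁) ℝ) (hW : Wᵀ * W = 1)
    (μ : Fin r₁ → ℝ) (hμ : ∀ i, μ i ∈ Set.Icc a b)
    (hΦW : Φ * W = W * Matrix.diagonal μ)
    (U : Matrix (Fin n) (Fin n) ℝ) (hU : Uᵀ * U = 1 ∧ U * Uᵀ = 1)
    (ψ : Fin n → ℝ) (hΨU : Ψ = U * Matrix.diagonal ψ * Uᵀ)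
    (P : Matrix (Fin n) (Fin n) ℝ)
    (hP : P = ∑ i ∈ Finset.univ.filter (fun i => a - δ < ψ i ∧ ψ i < b + δ),
        Matrix.vecMulVec (fun k => U k i) (fun k => U k i)) :
    N (W * Wᵀ * (1 - P)) ≤ N (Φ - Ψ) / δ := by
  -- center and radius of [a, b]
  set c : ℝ := (a + b) / 2 with hcdef
  set ρ : ℝ := (b - a) / 2 with hρdef
  have hρ : 0 ≤ ρ := by rw [hρdef]; linarith
  have hρδ : 0 < ρ + δ := by linarith
  -- indicator of the complement set, and resolvent-type diagonal
  set q : Fin n → ℝ := fun j => if a - δ < ψ j ∧ ψ j < b + δ then 0 else 1 with hqdef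
  set g : Fin n → ℝ := fun j => if a - δ < ψ j ∧ ψ j < b + δ then 0 else (ψ j - c)⁻¹ with hgdef
  have hout : ∀ j, ¬(a - δ < ψ j ∧ ψ j < b + δ) → ρ + δ ≤ |ψ j - c| := by
    intro j hj
    rw [not_and_or] at hj
    rcases hj with hj | hj
    · push_neg at hj
      rw [abs_of_nonpos (by rw [hcdef]; linarith), hρdef, hcdef]
      linarith
    · push_neg at hj
      rw [abs_of_nonneg (by rw [hcdef]; linarith), hρdef, hcdef]
      linarith
  have hne : ∀ j, ¬(a - δ < ψ j ∧ ψ j < b + δ) → ψ j - c ≠ 0 := by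
    intro j hj
    have := hout j hj
    intro h
    rw [h, abs_zero] at this
    linarith
  have hgb : ∀ j, |g j| ≤ (ρ + δ)⁻¹ := by
    intro j
    rw [hgdef]
    by_cases hj : a - δ < ψ j ∧ ψ j < b + δ
    · simp [hj]
      positivity
    · simp only [hj, if_false]
      rw [abs_inv]
      exact inv_anti₀ hρδ (hout j hj)
  have hqb : ∀ j, |q j| ≤ 1 := by
    intro j
    rw [hqdef]
    by_cases hj : a - δ < ψ j ∧ ψ j < b + δ <;> simp [hj]
  -- basic rewriting helpers
  have hUU : ∀ X : Matrix (Fin n) (Fin n) ℝ, Uᵀ * (U * X) = X := by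
    intro X; rw [← Matrix.mul_assoc, hU.1, Matrix.one_mul]
  have hWW : ∀ X : Matrix (Fin r₁) (Fin n) ℝ, Wᵀ * (W * X) = X := by
    intro X; rw [← Matrix.mul_assoc, hW, Matrix.one_mul]
  have hddU : ∀ (f h : Fin n → ℝ) (X : Matrix (Fin n) (Fin n) ℝ),
      diagonal f * (diagonal h * X) = diagonal (fun j => f j * h j) * X := by
    intro f h X
    rw [← Matrix.mul_assoc, diagonal_mul_diagonal]
  -- the projector P as a diagonal conjugation
  have hPdiag : P = U * diagonal (fun j => if a - δ < ψ j ∧ ψ j < b + δ then (1:ℝ) else 0) * Uᵀ := by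
    ext k l
    rw [hP, Matrix.sum_apply]
    rw [Matrix.mul_apply]
    simp only [Matrix.transpose_apply, Matrix.mul_diagonal, Matrix.vecMulVec_apply]
    rw [Finset.sum_filter]
    refine Finset.sum_congr rfl fun j _ => ?_
    by_cases h : a - δ < ψ j ∧ ψ j < b + δ <;> simp [h]
  have h1P : (1 : Matrix (Fin n) (Fin n) ℝ) - P = U * diagonal q * Uᵀ := by
    have hsum : U * diagonal q * Uᵀ + P = 1 := by
      rw [hPdiag, ← Matrix.add_mul, ← Matrix.mul_add, Matrix.diagonal_add]
      have : (fun j => q j + if a - δ < ψ j ∧ ψ j < b + δ then (1:ℝ) else 0) = fun _ => (1:ℝ) := by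
        funext j
        rw [hqdef]
        by_cases h : a - δ < ψ j ∧ ψ j < b + δ <;> simp [h]
      rw [this, diagonal_one, Matrix.mul_one, hU.2]
    rw [← hsum]; abel
  -- key matrices
  set Ymat : Matrix (Fin n) (Fin n) ℝ := W * (Wᵀ * (U * (diagonal q * Uᵀ))) with hYdef
  set Rmat : Matrix (Fin n) (Fin n) ℝ := U * (diagonal g * Uᵀ) with hRdef
  set Amat : Matrix (Fin n) (Fin n) ℝ := W * (diagonal (fun i => μ i - c) * Wᵀ) with hAdef
  set Mmat : Matrix (Fin n) (Fin n) ℝ := W * (Wᵀ * ((Φ - Ψ) * (U * (diagonal q * Uᵀ)))) with hMdef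
  have hqg : (fun j => q j * g j) = g := by
    funext j
    rw [hqdef, hgdef]
    by_cases h : a - δ < ψ j ∧ ψ j < b + δ <;> simp [h]
  have hgoal_eq : W * Wᵀ * (1 - P) = Ymat := by
    rw [h1P, hYdef]
    simp only [Matrix.mul_assoc]
  -- the fundamental identity
  have hF1 : Wᵀ * Φ = diagonal μ * Wᵀ := by
    have h := congrArg Matrix.transpose hΦW
    simpa [Matrix.transpose_mul, hΦsymm.eq, Matrix.diagonal_transpose] using h
  have hWΦ : ∀ X : Matrix (Fin n) (Fin n) ℝ, Wᵀ * (Φ * X) = diagonal μ * (Wᵀ * X) := by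
    intro X; rw [← Matrix.mul_assoc, hF1, Matrix.mul_assoc]
  have hΨX : ∀ X : Matrix (Fin n) (Fin n) ℝ, Ψ * X = U * (diagonal ψ * (Uᵀ * X)) := by
    intro X; rw [hΨU]; simp only [Matrix.mul_assoc]
  have step1 : Ymat * Rmat = W * (Wᵀ * (U * (diagonal g * Uᵀ))) := by
    rw [hYdef, hRdef]
    simp only [Matrix.mul_assoc]
    rw [hUU, hddU, hqg]
  have step2 : Amat * (Ymat * Rmat)
      = W * (diagonal μ * (Wᵀ * (U * (diagonal g * Uᵀ))))
        - c • (W * (Wᵀ * (U * (diagonal g * Uᵀ)))) := by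
    rw [step1, hAdef]
    simp only [Matrix.mul_assoc]
    rw [hWW]
    have hsplit : (diagonal (fun i => μ i - c) : Matrix (Fin r₁) (Fin r₁) ℝ)
        = diagonal μ - c • 1 := by
      ext i j
      rcases eq_or_ne i j with rfl | hij
      · simp [Matrix.diagonal_apply_eq, Matrix.one_apply_eq]
      · simp [Matrix.diagonal_apply_ne _ hij, Matrix.one_apply_ne hij]
    rw [hsplit, Matrix.sub_mul, Matrix.mul_sub, Matrix.smul_mul, Matrix.one_mul,
      Matrix.mul_smul]
  have step3 : Mmat * Rmat
      = W * (diagonal μ * (Wᵀ * (U * (diagonal g * Uᵀ))))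
        - W * (Wᵀ * (U * (diagonal (fun j => ψ j * g j) * Uᵀ))) := by
    rw [hMdef, hRdef]
    simp only [Matrix.sub_mul, Matrix.mul_sub, Matrix.mul_assoc]
    rw [hWΦ, hΨX]
    simp only [Matrix.mul_assoc, hUU, hddU, hqg]
  have hc2 : c • (W * (Wᵀ * (U * (diagonal g * Uᵀ))))
      = W * (Wᵀ * (U * (diagonal (fun j => c * g j) * Uᵀ))) := by
    rw [show (diagonal (fun j => c * g j) : Matrix (Fin n) (Fin n) ℝ) = c • diagonal g by
      ext i j
      rcases eq_or_ne i j with rfl | hij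
      · simp
      · simp [Matrix.diagonal_apply_ne _ hij]]
    simp only [Matrix.smul_mul, Matrix.mul_smul]
  have rearr : ∀ A B C : Matrix (Fin n) (Fin n) ℝ, A - B - (A - C) = C - B := by
    intros; abel
  have hfun2 : (fun i => ψ i * g i - c * g i) = q := by
    funext i
    by_cases h : a - δ < ψ i ∧ ψ i < b + δ
    · simp [hgdef, hqdef, h]
    · simp only [hgdef, hqdef, h, if_false]
      rw [show ψ i * (ψ i - c)⁻¹ - c * (ψ i - c)⁻¹ = (ψ i - c) * (ψ i - c)⁻¹ by ring,
        mul_inv_cancel₀ (hne i h)]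
  have I1 : Amat * (Ymat * Rmat) - Mmat * Rmat = Ymat := by
    rw [step2, step3, rearr, hc2, hYdef]
    simp only [← Matrix.mul_sub, ← Matrix.sub_mul, Matrix.diagonal_sub]
    rw [hfun2]
  -- norm estimates
  have hμb : ∀ i, |μ i - c| ≤ ρ := by
    intro i
    have h1 := (hμ i).1
    have h2 := (hμ i).2
    rw [abs_le, hcdef, hρdef]
    constructor <;> [linarith; linarith]
  have bA : N (Amat * (Ymat * Rmat)) ≤ ρ * N (Ymat * Rmat) := by
    have : Amat * (Ymat * Rmat)
        = W * (diagonal (fun i => μ i - c) * (Wᵀ * (Ymat * Rmat))) := by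
      rw [hAdef]; simp only [Matrix.mul_assoc]
    rw [this]
    exact dk_contract_left_scaled N hN_add hN_smul hN_zero hN_inv W hW _ _ ρ hρ hμb
  have bYR : N (Ymat * Rmat) ≤ (ρ + δ)⁻¹ * N Ymat := by
    rw [hRdef]
    exact dk_contract_right_scaled N hN_add hN_smul hN_zero hN_inv U hU.1 Ymat g
      ((ρ + δ)⁻¹) (by positivity) hgb
  have bMR : N (Mmat * Rmat) ≤ (ρ + δ)⁻¹ * N Mmat := by
    rw [hRdef]
    exact dk_contract_right_scaled N hN_add hN_smul hN_zero hN_inv U hU.1 Mmat g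
      ((ρ + δ)⁻¹) (by positivity) hgb
  have bM : N Mmat ≤ N (Φ - Ψ) := by
    have h1 : Mmat = W * (diagonal (fun _ : Fin r₁ => (1:ℝ))
        * (Wᵀ * ((Φ - Ψ) * (U * (diagonal q * Uᵀ))))) := by
      rw [hMdef, diagonal_one, Matrix.one_mul]
    have h2 : N (W * (diagonal (fun _ : Fin r₁ => (1:ℝ))
        * (Wᵀ * ((Φ - Ψ) * (U * (diagonal q * Uᵀ))))))
        ≤ N ((Φ - Ψ) * (U * (diagonal q * Uᵀ))) := by
      refine dk_contract_left N hN_add hN_smul hN_inv W hW _ _ ?_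
      intro i; simp
    have h3 : N ((Φ - Ψ) * (U * (diagonal q * Uᵀ))) ≤ N (Φ - Ψ) :=
      dk_contract_right N hN_add hN_smul hN_inv U hU.1 (Φ - Ψ) q hqb
    rw [h1]
    exact le_trans h2 h3
  -- subtraction triangle inequality
  have hNsub : ∀ X Y : Matrix (Fin n) (Fin n) ℝ, N (X - Y) ≤ N X + N Y := by
    intro X Y
    have h := hN_add X (-Y)
    have hneg : N (-Y) = N Y := by
      have := hN_smul (-1) Y
      simpa using this
    rw [hneg] at h
    simpa [sub_eq_add_neg] using h
  -- put everything together
  have main : N Ymat ≤ ρ * ((ρ + δ)⁻¹ * N Ymat) + (ρ + δ)⁻¹ * N (Φ - Ψ) := by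
    calc N Ymat = N (Amat * (Ymat * Rmat) - Mmat * Rmat) := by rw [I1]
      _ ≤ N (Amat * (Ymat * Rmat)) + N (Mmat * Rmat) := hNsub _ _
      _ ≤ ρ * ((ρ + δ)⁻¹ * N Ymat) + (ρ + δ)⁻¹ * N (Φ - Ψ) := by
          have t1 : N (Amat * (Ymat * Rmat)) ≤ ρ * ((ρ + δ)⁻¹ * N Ymat) :=
            le_trans bA (mul_le_mul_of_nonneg_left bYR hρ)
          have t2 : N (Mmat * Rmat) ≤ (ρ + δ)⁻¹ * N (Φ - Ψ) :=
            le_trans bMR (mul_le_mul_of_nonneg_left bM (by positivity))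
          exact add_le_add t1 t2
  rw [hgoal_eq, le_div_iff₀ hδ]
  have hmul := mul_le_mul_of_nonneg_left main (le_of_lt hρδ)
  have hexp : (ρ + δ) * (ρ * ((ρ + δ)⁻¹ * N Ymat) + (ρ + δ)⁻¹ * N (Φ - Ψ))
      = ρ * N Ymat + N (Φ - Ψ) := by
    field_simp
  rw [hexp] at hmul
  nlinarith [hmul]
end

section
/- Let 1 ≤ r < n, suppose φ_r < φ_{r+1} and ψ_r < ψ_{r+1}, and let W₀ = [w₁, …, w_r] ∈ 𝕍_{n,r} and V₀ = [v₁, …, v_r] ∈ 𝕍_{n,r} consist of the first r columns of W and V respectively. Then there exists an orthogonal matrix Q ∈ O(r) such that ‖W₀ − V₀ Q‖_F ≤ c_{n,r} · ‖Φ − Ψ‖₂ / max(φ_{r+1} − ψ_r, ψ_{r+1} − φ_r). -/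
open Matrix

set_option maxHeartbeats 1000000

lemma specNorm_nonneg {m r : ℕ} (M : Matrix (Fin m) (Fin r) ℝ) : 0 ≤ specNorm M :=
  norm_nonneg _

lemma sq_mulVec_le {m r : ℕ} (M : Matrix (Fin m) (Fin r) ℝ) (x : Fin r → ℝ) :
    ∑ i, (M.mulVec x i) ^ 2 ≤ specNorm M ^ 2 * ∑ j, (x j) ^ 2 := by
  set y : EuclideanSpace ℝ (Fin r) := (WithLp.equiv 2 (Fin r → ℝ)).symm x
  have h := (LinearMap.toContinuousLinearMap (Matrix.toEuclideanLin M)).le_opNorm y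
  have happ : (LinearMap.toContinuousLinearMap (Matrix.toEuclideanLin M)) y
      = (WithLp.equiv 2 (Fin m → ℝ)).symm (M.mulVec x) := by
    rfl
  rw [happ] at h
  have hny : ‖y‖ = Real.sqrt (∑ j, (x j)^2) := by
    rw [EuclideanSpace.norm_eq]
    congr 1
    apply Finset.sum_congr rfl
    intro j _
    rw [Real.norm_eq_abs, sq_abs]
    rfl
  have hnx : ‖(WithLp.equiv 2 (Fin m → ℝ)).symm (M.mulVec x)‖
      = Real.sqrt (∑ i, (M.mulVec x i)^2) := by
    rw [EuclideanSpace.norm_eq]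
    congr 1
    apply Finset.sum_congr rfl
    intro j _
    rw [Real.norm_eq_abs, sq_abs]
    rfl
  rw [hnx, hny] at h
  have h1 : (0:ℝ) ≤ ∑ i, (M.mulVec x i)^2 := Finset.sum_nonneg fun _ _ => sq_nonneg _
  have h2 : (0:ℝ) ≤ ∑ j, (x j)^2 := Finset.sum_nonneg fun _ _ => sq_nonneg _
  calc ∑ i, (M.mulVec x i)^2 = Real.sqrt (∑ i, (M.mulVec x i)^2) ^ 2 := (Real.sq_sqrt h1).symm
    _ ≤ (specNorm M * Real.sqrt (∑ j, (x j)^2)) ^ 2 := by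
        apply pow_le_pow_left₀ (Real.sqrt_nonneg _) h
    _ = specNorm M ^2 * ∑ j, (x j)^2 := by
        rw [mul_pow, Real.sq_sqrt h2]

lemma exists_max_orth (r : ℕ) (M : Matrix (Fin r) (Fin r) ℝ) :
    ∃ Q : Matrix (Fin r) (Fin r) ℝ, Qᵀ * Q = 1 ∧
      ∀ R : Matrix (Fin r) (Fin r) ℝ, Rᵀ * R = 1 → (Rᵀ * M).trace ≤ (Qᵀ * M).trace := by
  set K : Set (Matrix (Fin r) (Fin r) ℝ) := {Q | Qᵀ * Q = 1}
  have hKne : K.Nonempty := ⟨1, by show (1:Matrix (Fin r) (Fin r) ℝ)ᵀ * 1 = 1; simp⟩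
  have hclosed : IsClosed K := by
    have : Continuous fun Q : Matrix (Fin r) (Fin r) ℝ => Qᵀ * Q :=
      (continuous_id.matrix_transpose).matrix_mul continuous_id
    exact isClosed_eq this continuous_const
  have hsub : K ⊆ (Set.univ.pi fun _ : Fin r => Set.univ.pi fun _ : Fin r => Set.Icc (-1:ℝ) 1) := by
    intro Q hQ
    intro i _ j _
    have hdiag : ∑ k, Q k j ^ 2 = 1 := by
      have := congrFun (congrFun hQ j) j
      simpa [Matrix.mul_apply, Matrix.one_apply, sq] using this
    have h1 : Q i j ^ 2 ≤ 1 := by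
      rw [← hdiag]
      exact Finset.single_le_sum (fun k _ => sq_nonneg (Q k j)) (Finset.mem_univ i)
    constructor
    · nlinarith
    · nlinarith
  have hcompact : IsCompact K := by
    refine IsCompact.of_isClosed_subset ?_ hclosed hsub
    exact isCompact_univ_pi fun _ => isCompact_univ_pi fun _ => isCompact_Icc
  have hcont : Continuous fun Q : Matrix (Fin r) (Fin r) ℝ => (Qᵀ * M).trace := by
    simp only [Matrix.trace, Matrix.diag, Matrix.mul_apply, Matrix.transpose_apply]
    exact continuous_finset_sum _ fun i _ => continuous_finset_sum _ fun k _ =>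
      ((continuous_apply_apply k i).comp continuous_id).mul continuous_const
  obtain ⟨Q, hQK, hQmax⟩ := hcompact.exists_isMaxOn hKne hcont.continuousOn
  exact ⟨Q, hQK, fun R hR => hQmax hR⟩

lemma stdBasis_transpose {r : ℕ} (i j : Fin r) (c : ℝ) :
    (Matrix.single i j c)ᵀ = Matrix.single j i c := by
  ext a b
  simp [Matrix.single, transpose_apply, and_comm]

lemma trace_stdBasis_mul {r : ℕ} (i j : Fin r) (c : ℝ) (P : Matrix (Fin r) (Fin r) ℝ) :
    (Matrix.single i j c * P).trace = c * P j i := by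
  simp [Matrix.trace, Matrix.diag, Matrix.mul_apply, Matrix.single, ite_and,
    Finset.sum_ite_eq, Finset.sum_ite_eq']

-- Givens rotation is orthogonal and its trace-gain formula
lemma givens_step {r : ℕ} (i j : Fin r) (hij : i ≠ j) (t : ℝ)
    (P : Matrix (Fin r) (Fin r) ℝ)
    (hmax : ∀ R : Matrix (Fin r) (Fin r) ℝ, Rᵀ * R = 1 → (R * P).trace ≤ P.trace) :
    t * (P i j - P j i) ≤ t^2 * (P i i + P j j) := by
  set c : ℝ := (1 - t^2)/(1 + t^2) with hc
  set s : ℝ := 2*t/(1 + t^2) with hs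
  have ht : (0:ℝ) < 1 + t^2 := by positivity
  have hcs : c^2 + s^2 = 1 := by
    rw [hc, hs]
    field_simp
    ring
  set A : Matrix (Fin r) (Fin r) ℝ := Matrix.single i i 1 + Matrix.single j j 1 with hA
  set B : Matrix (Fin r) (Fin r) ℝ := Matrix.single j i 1 - Matrix.single i j 1 with hB
  have hAT : Aᵀ = A := by rw [hA, transpose_add, stdBasis_transpose, stdBasis_transpose]
  have hBT : Bᵀ = -B := by
    rw [hB, transpose_sub, stdBasis_transpose, stdBasis_transpose]; ring_nf; abel
  have hA2 : A * A = A := by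
    rw [hA]
    simp only [add_mul, mul_add, Matrix.single_mul_single_same,
      Matrix.single_mul_single_of_ne _ _ _ _ hij, Matrix.single_mul_single_of_ne _ _ _ _ hij.symm,
      mul_one, add_zero, zero_add]
  have hB2 : B * B = -A := by
    rw [hB, hA]
    simp only [sub_mul, mul_sub, Matrix.single_mul_single_same,
      Matrix.single_mul_single_of_ne _ _ _ _ hij, Matrix.single_mul_single_of_ne _ _ _ _ hij.symm,
      mul_one]
    abel
  have hAB : A * B = B := by
    rw [hB, hA]
    simp only [add_mul, mul_sub, Matrix.single_mul_single_same,
      Matrix.single_mul_single_of_ne _ _ _ _ hij, Matrix.single_mul_single_of_ne _ _ _ _ hij.symm,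
      mul_one]
    abel
  have hBA : B * A = B := by
    rw [hB, hA]
    simp only [sub_mul, mul_add, Matrix.single_mul_single_same,
      Matrix.single_mul_single_of_ne _ _ _ _ hij, Matrix.single_mul_single_of_ne _ _ _ _ hij.symm,
      mul_one]
    abel
  set G : Matrix (Fin r) (Fin r) ℝ := 1 + (c-1) • A + s • B with hG
  have hGT : Gᵀ = 1 + (c-1) • A + (-s) • B := by
    rw [hG, transpose_add, transpose_add, transpose_one, transpose_smul, transpose_smul,
      hAT, hBT]
    rw [smul_neg, neg_smul]
  have hGorth : Gᵀ * G = 1 := by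
    rw [hGT, hG]
    simp only [add_mul, mul_add, one_mul, mul_one, smul_mul_assoc, mul_smul_comm,
      smul_smul, hA2, hB2, hAB, hBA]
    match_scalars <;> (try (simp only [hc, hs]; field_simp)) <;> try ring
  have htr : (G * P).trace = P.trace + (c-1) * (P i i + P j j) + s * (P i j - P j i) := by
    rw [hG]
    simp only [add_mul, one_mul, smul_mul_assoc, trace_add, trace_smul, hA, hB, add_mul, sub_mul,
      trace_add, trace_sub]
    rw [trace_stdBasis_mul, trace_stdBasis_mul, trace_stdBasis_mul, trace_stdBasis_mul]
    simp [smul_eq_mul]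
    ring
  have hle := hmax G hGorth
  rw [htr] at hle
  have hle2 : (c-1) * (P i i + P j j) + s * (P i j - P j i) ≤ 0 := by linarith
  rw [hc, hs] at hle2
  have h3 : (1+t^2) * (((1 - t ^ 2) / (1 + t ^ 2) - 1) * (P i i + P j j) +
      2 * t / (1 + t ^ 2) * (P i j - P j i)) ≤ 0 :=
    mul_nonpos_of_nonneg_of_nonpos (le_of_lt ht) hle2
  have h4 : (-(2*t^2)) * (P i i + P j j) + 2*t*(P i j - P j i) ≤ 0 := by
    have e : (1+t^2) * (((1 - t ^ 2) / (1 + t ^ 2) - 1) * (P i i + P j j) +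
      2 * t / (1 + t ^ 2) * (P i j - P j i)) =
      (-(2*t^2)) * (P i i + P j j) + 2*t*(P i j - P j i) := by
      field_simp
      ring
    linarith [e ▸ h3]
  nlinarith [h4]

lemma symm_of_max {r : ℕ} (P : Matrix (Fin r) (Fin r) ℝ)
    (hmax : ∀ R : Matrix (Fin r) (Fin r) ℝ, Rᵀ * R = 1 → (R * P).trace ≤ P.trace) :
    Pᵀ = P := by
  ext a b
  rw [transpose_apply]
  rcases eq_or_ne a b with h | h
  · rw [h]
  · have key : ∀ t : ℝ, t * (P b a - P a b) ≤ t^2 * (P b b + P a a) :=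
      fun t => givens_step b a h.symm t P hmax
    set d := P b a - P a b with hd
    set m := |P b b + P a a| with hm
    have hm0 : 0 ≤ m := abs_nonneg _
    have hma : P b b + P a a ≤ m := le_abs_self _
    by_contra hne
    have hdne : d ≠ 0 := fun hh => hne (by linarith [sub_eq_zero.mp hh])
    have hd2 : 0 < d^2 := by positivity
    have := key (d / (m+1))
    have hm1 : (0:ℝ) < m + 1 := by linarith
    rw [div_pow] at this
    have hA : d / (m + 1) * d = d^2/(m+1) := by ring
    rw [hA] at this
    have hB : d ^ 2 / (m + 1) ^ 2 * (P b b + P a a) ≤ d^2 * m / (m+1)^2 := by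
      rw [div_mul_eq_mul_div]
      apply div_le_div_of_nonneg_right ?_ (by positivity)
      nlinarith
    have hC : d^2 * m / (m+1)^2 < d^2 / (m+1) := by
      rw [div_lt_div_iff₀ (by positivity) hm1]
      nlinarith
    linarith

lemma psd_of_max {r : ℕ} (P : Matrix (Fin r) (Fin r) ℝ)
    (hmax : ∀ R : Matrix (Fin r) (Fin r) ℝ, Rᵀ * R = 1 → (R * P).trace ≤ P.trace)
    (u : Fin r → ℝ) (hu : ∑ k, (u k)^2 = 1) :
    0 ≤ u ⬝ᵥ P.mulVec u := by
  set N : Matrix (Fin r) (Fin r) ℝ := vecMulVec u u with hN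
  have hNT : Nᵀ = N := by
    ext a b; simp [hN, vecMulVec_apply, mul_comm]
  have hN2 : N * N = N := by
    ext a b
    simp only [hN, Matrix.mul_apply, vecMulVec_apply]
    have : ∑ k, u a * u k * (u k * u b) = (u a * u b) * ∑ k, (u k)^2 := by
      rw [Finset.mul_sum]; apply Finset.sum_congr rfl; intro k _; ring
    rw [this, hu, mul_one]
  set R : Matrix (Fin r) (Fin r) ℝ := 1 - (2:ℝ) • N with hR
  have hRorth : Rᵀ * R = 1 := by
    rw [hR]
    rw [transpose_sub, transpose_one, transpose_smul, hNT]
    simp only [sub_mul, mul_sub, one_mul, mul_one, smul_mul_assoc, mul_smul_comm, smul_smul,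
      hN2]
    match_scalars <;> ring
  have htrN : (N * P).trace = u ⬝ᵥ P.mulVec u := by
    simp only [Matrix.trace, Matrix.diag, Matrix.mul_apply, hN, vecMulVec_apply,
      dotProduct, Matrix.mulVec, dotProduct]
    rw [Finset.sum_comm]
    apply Finset.sum_congr rfl
    intro k _
    rw [Finset.mul_sum]
    apply Finset.sum_congr rfl
    intro i _
    ring
  have hle := hmax R hRorth
  rw [hR] at hle
  simp only [sub_mul, one_mul, smul_mul_assoc, trace_sub, trace_smul, smul_eq_mul] at hle
  rw [htrN] at hle
  linarith

lemma sq_orthT_mulVec {r : ℕ} (Q : Matrix (Fin r) (Fin r) ℝ) (hQ : Q * Qᵀ = 1)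
    (y : Fin r → ℝ) : ∑ i, (Qᵀ.mulVec y i)^2 = ∑ i, (y i)^2 := by
  have h1 : ∑ i, (Qᵀ.mulVec y i)^2 = (Qᵀ.mulVec y) ⬝ᵥ (Qᵀ.mulVec y) := by
    simp [dotProduct, sq]
  have h2 : ∑ i, (y i)^2 = y ⬝ᵥ y := by simp [dotProduct, sq]
  rw [h1, h2, dotProduct_mulVec, Matrix.vecMul_transpose, Matrix.mulVec_mulVec, hQ,
    Matrix.one_mulVec]

lemma procrustes {r : ℕ} (M : Matrix (Fin r) (Fin r) ℝ)
    (hM : ∀ x : Fin r → ℝ, ∑ i, ((M.mulVec x) i)^2 ≤ ∑ i, (x i)^2) :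
    ∃ Q : Matrix (Fin r) (Fin r) ℝ, Qᵀ * Q = 1 ∧ (Mᵀ * M).trace ≤ (Qᵀ * M).trace := by
  obtain ⟨Q, hQ, hQmax⟩ := exists_max_orth r M
  have hQQT : Q * Qᵀ = 1 := mul_eq_one_comm.mp hQ
  refine ⟨Q, hQ, ?_⟩
  set P : Matrix (Fin r) (Fin r) ℝ := Qᵀ * M with hP
  have hmax' : ∀ R : Matrix (Fin r) (Fin r) ℝ, Rᵀ * R = 1 → (R * P).trace ≤ P.trace := by
    intro R hR
    have hRRT : R * Rᵀ = 1 := mul_eq_one_comm.mp hR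
    have hO : (Q * Rᵀ)ᵀ * (Q * Rᵀ) = 1 := by
      rw [transpose_mul, transpose_transpose, mul_assoc, ← mul_assoc Qᵀ, hQ, one_mul]
      exact hRRT
    have := hQmax (Q * Rᵀ) hO
    rw [transpose_mul, transpose_transpose, mul_assoc] at this
    exact this
  have hPT : Pᵀ = P := symm_of_max P hmax'
  have hPH : P.IsHermitian := by
    rw [Matrix.IsHermitian, Matrix.conjTranspose_eq_transpose_of_trivial, hPT]
  -- eigen data
  set lam : Fin r → ℝ := hPH.eigenvalues with hlam
  have hunit : ∀ k, ∑ i, ((hPH.eigenvectorBasis k : EuclideanSpace ℝ (Fin r)) i)^2 = 1 := by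
    intro k
    have hn : ‖hPH.eigenvectorBasis k‖ = 1 := hPH.eigenvectorBasis.orthonormal.1 k
    rw [EuclideanSpace.norm_eq] at hn
    have := congrArg (fun x : ℝ => x^2) hn
    simp only [one_pow] at this
    rw [Real.sq_sqrt (Finset.sum_nonneg fun _ _ => sq_nonneg _)] at this
    rw [← this]
    apply Finset.sum_congr rfl
    intro i _
    rw [Real.norm_eq_abs, sq_abs]
  have heig : ∀ k, P.mulVec (hPH.eigenvectorBasis k) = lam k • ⇑(hPH.eigenvectorBasis k) :=
    fun k => hPH.mulVec_eigenvectorBasis k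
  have hlam0 : ∀ k, 0 ≤ lam k := by
    intro k
    have h0 := psd_of_max P hmax' _ (hunit k)
    rw [heig k] at h0
    have : (hPH.eigenvectorBasis k : EuclideanSpace ℝ (Fin r)) ⬝ᵥ
        (lam k • ⇑(hPH.eigenvectorBasis k)) = lam k := by
      rw [dotProduct_smul]
      have : (hPH.eigenvectorBasis k : EuclideanSpace ℝ (Fin r)) ⬝ᵥ ⇑(hPH.eigenvectorBasis k)
          = 1 := by
        rw [← hunit k]
        simp [dotProduct, sq]
      rw [this, smul_eq_mul, mul_one]
    rw [this] at h0
    exact h0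
  have hlam1 : ∀ k, lam k ≤ 1 := by
    intro k
    have x : Fin r → ℝ := fun i => hPH.eigenvectorBasis k i
    set x : Fin r → ℝ := fun i => hPH.eigenvectorBasis k i with hx
    have hx2 : P.mulVec x = lam k • x := hPH.mulVec_eigenvectorBasis k
    have hxu : ∑ i, (x i)^2 = 1 := hunit k
    have h1 : ∑ i, ((P.mulVec x) i)^2 = lam k ^ 2 := by
      rw [hx2]
      simp only [Pi.smul_apply, smul_eq_mul, mul_pow]
      rw [← Finset.mul_sum, hxu, mul_one]
    have hPx : P.mulVec x = Qᵀ.mulVec (M.mulVec x) := by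
      rw [hP, ← Matrix.mulVec_mulVec]
    have h2 : ∑ i, ((P.mulVec x) i)^2 ≤ 1 := by
      rw [hPx, sq_orthT_mulVec Q hQQT]
      calc ∑ i, ((M.mulVec x) i)^2 ≤ ∑ i, (x i)^2 := hM _
        _ = 1 := hxu
    nlinarith [h1, h2, hlam0 k]
  -- traces via spectral theorem
  set U : Matrix (Fin r) (Fin r) ℝ := (hPH.eigenvectorUnitary : Matrix (Fin r) (Fin r) ℝ)
    with hU
  have hUU : star U * U = 1 := Matrix.mem_unitaryGroup_iff'.mp hPH.eigenvectorUnitary.2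
  have hspec : P = U * Matrix.diagonal lam * star U := by
    have := hPH.spectral_theorem
    rw [RCLike.ofReal_real_eq_id] at this
    simpa using this
  have htrP : P.trace = ∑ k, lam k := by
    rw [hspec, Matrix.trace_mul_cycle, hUU, one_mul, Matrix.trace_diagonal]
  have htrP2 : (P * P).trace = ∑ k, lam k ^ 2 := by
    have : P * P = U * (Matrix.diagonal lam * Matrix.diagonal lam) * star U := by
      rw [hspec]
      rw [show U * Matrix.diagonal lam * star U * (U * Matrix.diagonal lam * star U)
        = U * Matrix.diagonal lam * (star U * U) * Matrix.diagonal lam * star U by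
          noncomm_ring]
      rw [hUU, mul_one]
      noncomm_ring
    rw [this, Matrix.trace_mul_cycle, hUU, one_mul,
      Matrix.diagonal_mul_diagonal, Matrix.trace_diagonal]
    simp [sq]
  have hPP : Pᵀ * P = Mᵀ * M := by
    rw [hP, transpose_mul, transpose_transpose, mul_assoc, ← mul_assoc Q, hQQT, one_mul]
  have hMM : Mᵀ * M = P * P := by rw [← hPP, hPT]
  rw [hMM, htrP2, htrP]
  apply Finset.sum_le_sum
  intro k _
  nlinarith [hlam0 k, hlam1 k]

lemma specNorm_neg {m r : ℕ} (M : Matrix (Fin m) (Fin r) ℝ) : specNorm (-M) = specNorm M := by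
  unfold specNorm
  rw [map_neg, map_neg, norm_neg]

lemma sq_mulVec_eq {n r : ℕ} (A : Matrix (Fin n) (Fin r) ℝ) (x : Fin r → ℝ) :
    ∑ i, (A.mulVec x i)^2 = x ⬝ᵥ ((Aᵀ * A).mulVec x) := by
  have h1 : ∑ i, (A.mulVec x i)^2 = (A.mulVec x) ⬝ᵥ (A.mulVec x) := by
    simp [dotProduct, sq]
  rw [h1, dotProduct_mulVec, dotProduct_comm, ← Matrix.mulVec_transpose,
    Matrix.mulVec_mulVec]

lemma sq_mulVec_orth {n r : ℕ} (A : Matrix (Fin n) (Fin r) ℝ) (hA : Aᵀ * A = 1)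
    (x : Fin r → ℝ) : ∑ i, (A.mulVec x i)^2 = ∑ i, (x i)^2 := by
  rw [sq_mulVec_eq, hA, Matrix.one_mulVec]
  simp [dotProduct, sq]

lemma sum_split {n r : ℕ} (hrn : r ≤ n) (f : Fin n → ℝ) :
    ∑ j, f j = (∑ k : Fin r, f ⟨k, by omega⟩) +
      ∑ i : Fin (n-r), f ⟨r + i, by have := i.isLt; omega⟩ := by
  classical
  set e : Fin r ⊕ Fin (n-r) → Fin n :=
    Sum.elim (fun k => (⟨k, by omega⟩ : Fin n))
      (fun i => (⟨r + i, by have := i.isLt; omega⟩ : Fin n)) with he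
  have hinj : Function.Injective e := by
    rintro (a | a) (b | b) hab <;>
      simp only [he, Sum.elim_inl, Sum.elim_inr, Fin.mk.injEq] at hab <;>
      first
        | (congr 1; exact Fin.ext (by omega))
        | (exfalso; have := a.isLt; have := b.isLt; omega)
  have hbij : Function.Bijective e := by
    rw [Fintype.bijective_iff_injective_and_card]
    refine ⟨hinj, by simp; omega⟩
  rw [← Fintype.sum_bijective e hbij (fun x => f (e x)) f (fun x => rfl)]
  rw [Fintype.sum_sum_type]
  simp [he]

lemma sin_bound (n r : ℕ) (hr : 1 ≤ r) (hrn : r < n)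
    (W V : Matrix (Fin n) (Fin n) ℝ) (φ ψ : Fin n → ℝ)
    (hφmono : Monotone φ) (hψmono : Monotone ψ)
    (hW1 : Wᵀ * W = 1) (hW2 : W * Wᵀ = 1) (hV1 : Vᵀ * V = 1) (hV2 : V * Vᵀ = 1)
    (hδ : 0 ≤ ψ ⟨r, hrn⟩ - φ ⟨r - 1, lt_of_le_of_lt (Nat.sub_le r 1) hrn⟩) :
    (ψ ⟨r, hrn⟩ - φ ⟨r - 1, lt_of_le_of_lt (Nat.sub_le r 1) hrn⟩)^2 *
      ∑ i : Fin (n-r), ∑ k : Fin r,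
        ((Vᵀ * W) ⟨r + i, by have := i.isLt; omega⟩ ⟨k, lt_trans k.isLt hrn⟩)^2
      ≤ ((min r (n - r) : ℕ) : ℝ) *
        specNorm (W * Matrix.diagonal φ * Wᵀ - V * Matrix.diagonal ψ * Vᵀ)^2 := by
  set E : Matrix (Fin n) (Fin n) ℝ :=
    W * Matrix.diagonal φ * Wᵀ - V * Matrix.diagonal ψ * Vᵀ with hE
  have hEsym : Eᵀ = E := by
    rw [hE, transpose_sub]
    congr 1 <;> rw [transpose_mul, transpose_mul, transpose_transpose, diagonal_transpose,
      mul_assoc]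
  set Z : Matrix (Fin n) (Fin n) ℝ := Vᵀ * W with hZ
  set Y : Matrix (Fin n) (Fin n) ℝ := Vᵀ * E * W with hY
  -- structure of Y
  have hYZ : ∀ a b : Fin n, Y a b = Z a b * (φ b - ψ a) := by
    intro a b
    have h1 : Vᵀ * E * W = Z * Matrix.diagonal φ - Matrix.diagonal ψ * Z := by
      rw [hE, hZ]
      rw [mul_sub, sub_mul]
      congr 1
      · -- Vᵀ * (W * diagonal φ * Wᵀ) * W = Vᵀ * W * diagonal φ
        rw [mul_assoc Vᵀ, mul_assoc (W * Matrix.diagonal φ), hW1, mul_one, ← mul_assoc]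
      · -- Vᵀ * (V * diagonal ψ * Vᵀ) * W = diagonal ψ * (Vᵀ * W)
        rw [← mul_assoc, ← mul_assoc, hV1, one_mul, mul_assoc]
    rw [hY, h1]
    simp only [Matrix.sub_apply, mul_diagonal, diagonal_mul]
    ring
  -- column bound
  have key1 : ∀ k : Fin n, ∑ i, (Y i k)^2 ≤ specNorm E ^ 2 := by
    intro k
    have hcol : (fun i => Y i k) = Vᵀ.mulVec (E.mulVec (fun j => W j k)) := by
      funext i
      rw [Matrix.mulVec_mulVec]
      simp [hY, Matrix.mul_apply, Matrix.mulVec, dotProduct, Finset.mul_sum,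
        Finset.sum_mul]
    have h1 : ∑ i, (Y i k)^2 = ∑ i, (Vᵀ.mulVec (E.mulVec (fun j => W j k)) i)^2 := by
      rw [← hcol]
    rw [h1, sq_orthT_mulVec V hV2]
    have h2 := sq_mulVec_le E (fun j => W j k)
    have h3 : ∑ j, (W j k)^2 = 1 := by
      have := congrFun (congrFun hW1 k) k
      simpa [Matrix.mul_apply, Matrix.one_apply, sq] using this
    rw [h3, mul_one] at h2
    exact h2
  have key2 : ∀ i : Fin n, ∑ k, (Y i k)^2 ≤ specNorm E ^ 2 := by
    intro i
    have hrow : (fun k => Y i k) = Wᵀ.mulVec (E.mulVec (fun j => V j i)) := by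
      funext k
      rw [Matrix.mulVec_mulVec]
      have : Y i k = (Wᵀ * Eᵀ * V) k i := by
        rw [hY]
        simp only [Matrix.mul_apply, transpose_apply, Finset.sum_mul, Finset.mul_sum]
        rw [Finset.sum_comm]
        exact Finset.sum_congr rfl fun a _ => Finset.sum_congr rfl fun b _ => by ring
      rw [this, hEsym]
      simp [Matrix.mul_apply, Matrix.mulVec, dotProduct, Finset.mul_sum,
        Finset.sum_mul]
    have h1 : ∑ k, (Y i k)^2 = ∑ k, (Wᵀ.mulVec (E.mulVec (fun j => V j i)) k)^2 := by
      rw [← hrow]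
    rw [h1, sq_orthT_mulVec W hW2]
    have h2 := sq_mulVec_le E (fun j => V j i)
    have h3 : ∑ j, (V j i)^2 = 1 := by
      have := congrFun (congrFun hV1 i) i
      simpa [Matrix.mul_apply, Matrix.one_apply, sq] using this
    rw [h3, mul_one] at h2
    exact h2
  -- gap bound entrywise
  have hgap : ∀ (i : Fin (n-r)) (k : Fin r),
      (ψ ⟨r, hrn⟩ - φ ⟨r - 1, by omega⟩)^2 *
        (Z ⟨r + i, by have := i.isLt; omega⟩ ⟨k, by omega⟩)^2 ≤
      (Y ⟨r + i, by have := i.isLt; omega⟩ ⟨k, by omega⟩)^2 := by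
    intro i k
    rw [hYZ]
    have hφk : φ ⟨k, by omega⟩ ≤ φ ⟨r - 1, by omega⟩ := by
      apply hφmono
      simp only [Fin.mk_le_mk]
      have := k.isLt; omega
    have hψi : ψ ⟨r, hrn⟩ ≤ ψ ⟨r + i, by have := i.isLt; omega⟩ := by
      apply hψmono
      simp only [Fin.mk_le_mk]; omega
    have hsq : (ψ ⟨r, hrn⟩ - φ ⟨r - 1, by omega⟩)^2 ≤
        (φ (⟨k, by omega⟩ : Fin n) - ψ (⟨r + i, by have := i.isLt; omega⟩ : Fin n))^2 := by
      nlinarith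
    rw [mul_pow]
    nlinarith [sq_nonneg (Z (⟨r + i, by have := i.isLt; omega⟩ : Fin n) (⟨k, by omega⟩ : Fin n))]
  -- combine
  have hmain : (ψ ⟨r, hrn⟩ - φ ⟨r - 1, by omega⟩)^2 *
      ∑ i : Fin (n-r), ∑ k : Fin r,
        (Z ⟨r + i, by have := i.isLt; omega⟩ ⟨k, by omega⟩)^2 ≤
      ∑ i : Fin (n-r), ∑ k : Fin r,
        (Y ⟨r + i, by have := i.isLt; omega⟩ ⟨k, by omega⟩)^2 := by
    rw [Finset.mul_sum]
    apply Finset.sum_le_sum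
    intro i _
    rw [Finset.mul_sum]
    apply Finset.sum_le_sum
    intro k _
    exact hgap i k
  have hb1 : ∑ i : Fin (n-r), ∑ k : Fin r,
      (Y ⟨r + i, by have := i.isLt; omega⟩ ⟨k, by omega⟩)^2 ≤
      ((n - r : ℕ) : ℝ) * specNorm E ^ 2 := by
    calc ∑ i : Fin (n-r), ∑ k : Fin r, (Y ⟨r + i, by have := i.isLt; omega⟩ ⟨k, by omega⟩)^2
        ≤ ∑ i : Fin (n-r), ∑ k : Fin n, (Y ⟨r + i, by have := i.isLt; omega⟩ k)^2 := by
          apply Finset.sum_le_sum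
          intro i _
          rw [sum_split (le_of_lt hrn) (fun k => (Y ⟨r + i, by have := i.isLt; omega⟩ k)^2)]
          have : (0:ℝ) ≤ ∑ l : Fin (n-r),
              (Y ⟨r + i, by have := i.isLt; omega⟩ ⟨r + l, by have := l.isLt; omega⟩)^2 :=
            Finset.sum_nonneg fun _ _ => sq_nonneg _
          linarith
      _ ≤ ∑ _i : Fin (n-r), specNorm E ^ 2 := by
          apply Finset.sum_le_sum
          intro i _
          exact key2 ⟨r + i, by have := i.isLt; omega⟩
      _ = ((n - r : ℕ) : ℝ) * specNorm E ^ 2 := by simp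
  have hb2 : ∑ i : Fin (n-r), ∑ k : Fin r,
      (Y ⟨r + i, by have := i.isLt; omega⟩ ⟨k, by omega⟩)^2 ≤
      ((r : ℕ) : ℝ) * specNorm E ^ 2 := by
    rw [Finset.sum_comm]
    calc ∑ k : Fin r, ∑ i : Fin (n-r), (Y ⟨r + i, by have := i.isLt; omega⟩ ⟨k, by omega⟩)^2
        ≤ ∑ k : Fin r, ∑ i : Fin n, (Y i ⟨k, by omega⟩)^2 := by
          apply Finset.sum_le_sum
          intro k _
          rw [sum_split (le_of_lt hrn) (fun i => (Y i ⟨k, by omega⟩)^2)]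
          have : (0:ℝ) ≤ ∑ l : Fin r, (Y ⟨l, by omega⟩ ⟨k, by omega⟩)^2 :=
            Finset.sum_nonneg fun _ _ => sq_nonneg _
          linarith
      _ ≤ ∑ _k : Fin r, specNorm E ^ 2 := by
          apply Finset.sum_le_sum
          intro k _
          exact key1 ⟨k, by omega⟩
      _ = ((r : ℕ) : ℝ) * specNorm E ^ 2 := by simp
  have hmin : ∑ i : Fin (n-r), ∑ k : Fin r,
      (Y ⟨r + i, by have := i.isLt; omega⟩ ⟨k, by omega⟩)^2 ≤
      ((min r (n - r) : ℕ) : ℝ) * specNorm E ^ 2 := by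
    rcases le_total r (n - r) with h | h
    · rw [Nat.min_eq_left h]; exact hb2
    · rw [Nat.min_eq_right h]; exact hb1
  calc (ψ ⟨r, hrn⟩ - φ ⟨r - 1, by omega⟩)^2 * ∑ i : Fin (n-r), ∑ k : Fin r,
        ((Vᵀ * W) ⟨r + i, by have := i.isLt; omega⟩ ⟨k, by omega⟩)^2
      ≤ ∑ i : Fin (n-r), ∑ k : Fin r,
        (Y ⟨r + i, by have := i.isLt; omega⟩ ⟨k, by omega⟩)^2 := hmain
    _ ≤ ((min r (n - r) : ℕ) : ℝ) * specNorm E ^ 2 := hmin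
/-- For symmetric `Φ = W diag(φ) Wᵀ`, `Ψ = V diag(ψ) Vᵀ` with ordered
eigenvalues and nonzero r-th eigengaps (`φ_r < φ_{r+1}`, `ψ_r < ψ_{r+1}`, 1-indexed),
letting `W₀`, `V₀` be the first `r` columns of `W`, `V`, there exists `Q ∈ O(r)` with
`‖W₀ − V₀ Q‖_F ≤ c_{n,r} ‖Φ − Ψ‖₂ / max(φ_{r+1} − ψ_r, ψ_{r+1} − φ_r)`,
where `c_{n,r} = √(2 min(r, n−r))`. -/
theorem stmt_8 (n r : ℕ) (hr : 1 ≤ r) (hrn : r < n)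
    (Φ Ψ W V : Matrix (Fin n) (Fin n) ℝ)
    (φ ψ : Fin n → ℝ) (hφmono : Monotone φ) (hψmono : Monotone ψ)
    (hW : Wᵀ * W = 1 ∧ W * Wᵀ = 1) (hV : Vᵀ * V = 1 ∧ V * Vᵀ = 1)
    (hΦ : Φ = W * Matrix.diagonal φ * Wᵀ) (hΨ : Ψ = V * Matrix.diagonal ψ * Vᵀ)
    (hgapφ : φ ⟨r - 1, by omega⟩ < φ ⟨r, hrn⟩)
    (hgapψ : ψ ⟨r - 1, by omega⟩ < ψ ⟨r, hrn⟩)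
    (W₀ V₀ : Matrix (Fin n) (Fin r) ℝ)
    (hW₀ : W₀ = Matrix.of fun i (k : Fin r) => W i ⟨k, by omega⟩)
    (hV₀ : V₀ = Matrix.of fun i (k : Fin r) => V i ⟨k, by omega⟩) :
    ∃ Q : Matrix (Fin r) (Fin r) ℝ, Qᵀ * Q = 1 ∧ Q * Qᵀ = 1 ∧
      frobNorm (W₀ - V₀ * Q) ≤
        Real.sqrt (2 * ((min r (n - r) : ℕ) : ℝ)) * specNorm (Φ - Ψ) /
          max (φ ⟨r, hrn⟩ - ψ ⟨r - 1, by omega⟩) (ψ ⟨r, hrn⟩ - φ ⟨r - 1, by omega⟩) := by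
  obtain ⟨hW1, hW2⟩ := hW
  obtain ⟨hV1, hV2⟩ := hV
  subst hΦ hΨ
  -- column orthonormality facts
  have hWcol : ∀ a b : Fin n, ∑ j, W j a * W j b = if a = b then (1:ℝ) else 0 := by
    intro a b
    have := congrFun (congrFun hW1 a) b
    simpa [Matrix.mul_apply, Matrix.one_apply] using this
  have hVcol : ∀ a b : Fin n, ∑ j, V j a * V j b = if a = b then (1:ℝ) else 0 := by
    intro a b
    have := congrFun (congrFun hV1 a) b
    simpa [Matrix.mul_apply, Matrix.one_apply] using this
  have hW₀orth : W₀ᵀ * W₀ = 1 := by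
    ext k l
    simp only [hW₀, Matrix.mul_apply, Matrix.transpose_apply, Matrix.of_apply]
    rw [hWcol]
    simp [Matrix.one_apply, Fin.ext_iff]
  have hV₀orth : V₀ᵀ * V₀ = 1 := by
    ext k l
    simp only [hV₀, Matrix.mul_apply, Matrix.transpose_apply, Matrix.of_apply]
    rw [hVcol]
    simp [Matrix.one_apply, Fin.ext_iff]
  -- the matrix M = V₀ᵀ W₀
  set M : Matrix (Fin r) (Fin r) ℝ := V₀ᵀ * W₀ with hMdef
  have hMent : ∀ l k : Fin r, M l k =
      (Vᵀ * W) ⟨l, by omega⟩ ⟨k, by omega⟩ := by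
    intro l k
    simp [hMdef, hW₀, hV₀, Matrix.mul_apply, Matrix.transpose_apply]
  -- contraction property for Procrustes
  have hMcontract : ∀ x : Fin r → ℝ, ∑ i, ((M.mulVec x) i)^2 ≤ ∑ i, (x i)^2 := by
    intro x
    have h1 : M.mulVec x = V₀ᵀ.mulVec (W₀.mulVec x) := (Matrix.mulVec_mulVec _ _ _).symm
    rw [h1]
    have h2 : ∀ l : Fin r, (V₀ᵀ.mulVec (W₀.mulVec x)) l =
        (Vᵀ.mulVec (W₀.mulVec x)) ⟨l, by omega⟩ := by
      intro l
      simp [hV₀, Matrix.mulVec, dotProduct, Matrix.transpose_apply]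
    calc ∑ l, ((V₀ᵀ.mulVec (W₀.mulVec x)) l)^2
        = ∑ l : Fin r, ((Vᵀ.mulVec (W₀.mulVec x)) ⟨l, by omega⟩)^2 := by
          exact Finset.sum_congr rfl fun l _ => by rw [h2]
      _ ≤ ∑ j : Fin n, ((Vᵀ.mulVec (W₀.mulVec x)) j)^2 := by
          rw [sum_split (le_of_lt hrn) (fun j => ((Vᵀ.mulVec (W₀.mulVec x)) j)^2)]
          have : (0:ℝ) ≤ ∑ i : Fin (n-r),
              ((Vᵀ.mulVec (W₀.mulVec x)) ⟨r + i, by have := i.isLt; omega⟩)^2 :=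
            Finset.sum_nonneg fun _ _ => sq_nonneg _
          linarith
      _ = ∑ j : Fin n, ((W₀.mulVec x) j)^2 := sq_orthT_mulVec V hV2 _
      _ = ∑ i, (x i)^2 := sq_mulVec_orth W₀ hW₀orth x
  obtain ⟨Q, hQ1, htr⟩ := procrustes M hMcontract
  have hQ2 : Q * Qᵀ = 1 := mul_eq_one_comm.mp hQ1
  refine ⟨Q, hQ1, hQ2, ?_⟩
  -- gap positivity
  set dlt : ℝ := max (φ ⟨r, hrn⟩ - ψ ⟨r - 1, by omega⟩) (ψ ⟨r, hrn⟩ - φ ⟨r - 1, by omega⟩)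
    with hdlt
  have hδ : 0 < dlt := by
    by_contra h
    push_neg at h
    have h1 : φ ⟨r, hrn⟩ - ψ ⟨r - 1, by omega⟩ ≤ 0 := le_trans (le_max_left _ _) h
    have h2 : ψ ⟨r, hrn⟩ - φ ⟨r - 1, by omega⟩ ≤ 0 := le_trans (le_max_right _ _) h
    linarith
  -- sums
  set SS : ℝ := ∑ i : Fin (n-r), ∑ k : Fin r,
    ((Vᵀ * W) ⟨r + i, by have := i.isLt; omega⟩ ⟨k, by omega⟩)^2 with hSSdef
  set TT : ℝ := ∑ i : Fin (n-r), ∑ k : Fin r,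
    ((Wᵀ * V) ⟨r + i, by have := i.isLt; omega⟩ ⟨k, by omega⟩)^2 with hTTdef
  set MM : ℝ := ∑ k : Fin r, ∑ l : Fin r, (M l k)^2 with hMMdef
  -- split identities
  have hcolZ : ∀ (A B : Matrix (Fin n) (Fin n) ℝ), B * Bᵀ = 1 →
      (∀ a b : Fin n, ∑ j, A j a * A j b = if a = b then (1:ℝ) else 0) →
      ∀ k : Fin n, ∑ j : Fin n, ((Bᵀ * A) j k)^2 = 1 := by
    intro A B hB hA k
    have h1 : (fun j => (Bᵀ * A) j k) = Bᵀ.mulVec (fun j => A j k) := by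
      funext j
      simp [Matrix.mul_apply, Matrix.mulVec, dotProduct]
    have h2 : ∑ j : Fin n, ((Bᵀ * A) j k)^2 = ∑ j, ((Bᵀ.mulVec (fun j => A j k)) j)^2 := by
      rw [← h1]
    rw [h2, sq_orthT_mulVec B hB]
    have h3 := hA k k
    rw [if_pos rfl] at h3
    rw [← h3]
    exact Finset.sum_congr rfl fun j _ => by rw [pow_two]
  have hsplit1 : MM + SS = (r : ℝ) := by
    have hk : ∀ k : Fin r, (∑ l : Fin r, ((Vᵀ * W) ⟨l, by omega⟩ ⟨k, by omega⟩)^2) +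
        (∑ i : Fin (n-r), ((Vᵀ * W) ⟨r + i, by have := i.isLt; omega⟩ ⟨k, by omega⟩)^2)
        = 1 := by
      intro k
      have := hcolZ W V hV2 hWcol ⟨k, by omega⟩
      rw [sum_split (le_of_lt hrn) (fun j => ((Vᵀ * W) j ⟨k, by omega⟩)^2)] at this
      exact this
    have hMM' : MM = ∑ k : Fin r, ∑ l : Fin r,
        ((Vᵀ * W) ⟨l, by omega⟩ ⟨k, by omega⟩)^2 := by
      rw [hMMdef]
      exact Finset.sum_congr rfl fun k _ => Finset.sum_congr rfl fun l _ => by rw [hMent]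
    have hSS' : SS = ∑ k : Fin r, ∑ i : Fin (n-r),
        ((Vᵀ * W) ⟨r + i, by have := i.isLt; omega⟩ ⟨k, by omega⟩)^2 := by
      rw [hSSdef]; exact Finset.sum_comm
    rw [hMM', hSS', ← Finset.sum_add_distrib]
    rw [Finset.sum_congr rfl fun k _ => hk k]
    simp
  have hsplit2 : MM + TT = (r : ℝ) := by
    have hk : ∀ k : Fin r, (∑ l : Fin r, ((Wᵀ * V) ⟨l, by omega⟩ ⟨k, by omega⟩)^2) +
        (∑ i : Fin (n-r), ((Wᵀ * V) ⟨r + i, by have := i.isLt; omega⟩ ⟨k, by omega⟩)^2)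
        = 1 := by
      intro k
      have := hcolZ V W hW2 hVcol ⟨k, by omega⟩
      rw [sum_split (le_of_lt hrn) (fun j => ((Wᵀ * V) j ⟨k, by omega⟩)^2)] at this
      exact this
    have hMM' : MM = ∑ k : Fin r, ∑ l : Fin r,
        ((Wᵀ * V) ⟨l, by omega⟩ ⟨k, by omega⟩)^2 := by
      rw [hMMdef]
      rw [Finset.sum_comm]
      refine Finset.sum_congr rfl fun l _ => Finset.sum_congr rfl fun k _ => ?_
      rw [hMent]
      have hswap : (Vᵀ * W) (⟨l, by omega⟩ : Fin n) (⟨k, by omega⟩ : Fin n) =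
          (Wᵀ * V) (⟨k, by omega⟩ : Fin n) (⟨l, by omega⟩ : Fin n) := by
        simp only [Matrix.mul_apply, Matrix.transpose_apply]
        exact Finset.sum_congr rfl fun j _ => mul_comm _ _
      rw [hswap]
    have hTT' : TT = ∑ k : Fin r, ∑ i : Fin (n-r),
        ((Wᵀ * V) ⟨r + i, by have := i.isLt; omega⟩ ⟨k, by omega⟩)^2 := by
      rw [hTTdef]; exact Finset.sum_comm
    rw [hMM', hTT', ← Finset.sum_add_distrib]
    rw [Finset.sum_congr rfl fun k _ => hk k]
    simp
  have hTS : TT = SS := by linarith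
  -- the Davis-Kahan bound on SS
  have hkey : dlt^2 * SS ≤ ((min r (n - r) : ℕ) : ℝ) *
      specNorm (W * Matrix.diagonal φ * Wᵀ - V * Matrix.diagonal ψ * Vᵀ)^2 := by
    rcases le_total (φ ⟨r, hrn⟩ - ψ ⟨r - 1, by omega⟩) (ψ ⟨r, hrn⟩ - φ ⟨r - 1, by omega⟩)
      with hc | hc
    · have hmax : dlt = ψ ⟨r, hrn⟩ - φ ⟨r - 1, by omega⟩ := max_eq_right hc
      have hpos : 0 ≤ ψ ⟨r, hrn⟩ - φ ⟨r - 1, by omega⟩ := by rw [← hmax]; exact le_of_lt hδ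
      have hsin := sin_bound n r hr hrn W V φ ψ hφmono hψmono hW1 hW2 hV1 hV2 hpos
      rw [hmax]
      exact hsin
    · have hmax : dlt = φ ⟨r, hrn⟩ - ψ ⟨r - 1, by omega⟩ := max_eq_left hc
      have hpos : 0 ≤ φ ⟨r, hrn⟩ - ψ ⟨r - 1, by omega⟩ := by rw [← hmax]; exact le_of_lt hδ
      have hsin := sin_bound n r hr hrn V W ψ φ hψmono hφmono hV1 hV2 hW1 hW2 hpos
      have hflip : V * Matrix.diagonal ψ * Vᵀ - W * Matrix.diagonal φ * Wᵀ =
          -(W * Matrix.diagonal φ * Wᵀ - V * Matrix.diagonal ψ * Vᵀ) := (neg_sub _ _).symm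
      rw [hflip, specNorm_neg] at hsin
      rw [hmax]
      calc (φ ⟨r, hrn⟩ - ψ ⟨r - 1, by omega⟩)^2 * SS
          = (φ ⟨r, hrn⟩ - ψ ⟨r - 1, by omega⟩)^2 * TT := by rw [hTS]
        _ ≤ _ := hsin
  -- Frobenius norm squared computation
  have hQcol : ∀ k : Fin r, ∑ l, (Q l k)^2 = 1 := by
    intro k
    have := congrFun (congrFun hQ1 k) k
    simpa [Matrix.mul_apply, Matrix.one_apply, sq] using this
  set F : ℝ := ∑ i : Fin n, ∑ k : Fin r, ((W₀ - V₀ * Q) i k)^2 with hFdef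
  set cross : ℝ := ∑ k : Fin r, ∑ l : Fin r, Q l k * M l k with hcrossdef
  have he1 : ∑ i : Fin n, ∑ k : Fin r, (W₀ i k)^2 = (r:ℝ) := by
    rw [Finset.sum_comm]
    have : ∀ k : Fin r, ∑ i : Fin n, (W₀ i k)^2 = 1 := by
      intro k
      have := hWcol ⟨k, by omega⟩ ⟨k, by omega⟩
      rw [if_pos rfl] at this
      rw [← this]
      exact Finset.sum_congr rfl fun i _ => by simp [hW₀, sq]
    rw [Finset.sum_congr rfl fun k _ => this k]
    simp
  have he2 : ∑ i : Fin n, ∑ k : Fin r, ((V₀ * Q) i k)^2 = (r:ℝ) := by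
    rw [Finset.sum_comm]
    have : ∀ k : Fin r, ∑ i : Fin n, ((V₀ * Q) i k)^2 = 1 := by
      intro k
      have hcol : (fun i => (V₀ * Q) i k) = V₀.mulVec (fun l => Q l k) := by
        funext i
        simp [Matrix.mul_apply, Matrix.mulVec, dotProduct]
      have h1 : ∑ i : Fin n, ((V₀ * Q) i k)^2 =
          ∑ i, ((V₀.mulVec (fun l => Q l k)) i)^2 := by rw [← hcol]
      rw [h1, sq_mulVec_orth V₀ hV₀orth]
      exact hQcol k
    rw [Finset.sum_congr rfl fun k _ => this k]
    simp
  have he3 : ∑ i : Fin n, ∑ k : Fin r, W₀ i k * (V₀ * Q) i k = cross := by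
    rw [Finset.sum_comm, hcrossdef]
    refine Finset.sum_congr rfl fun k _ => ?_
    calc ∑ i : Fin n, W₀ i k * (V₀ * Q) i k
        = ∑ i : Fin n, ∑ l : Fin r, Q l k * (V₀ i l * W₀ i k) := by
          refine Finset.sum_congr rfl fun i _ => ?_
          rw [Matrix.mul_apply, Finset.mul_sum]
          exact Finset.sum_congr rfl fun l _ => by ring
      _ = ∑ l : Fin r, ∑ i : Fin n, Q l k * (V₀ i l * W₀ i k) := Finset.sum_comm
      _ = ∑ l : Fin r, Q l k * M l k := by
          refine Finset.sum_congr rfl fun l _ => ?_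
          rw [← Finset.mul_sum, hMdef, Matrix.mul_apply]
          congr 1
  have hFval : F = 2*(r:ℝ) - 2*cross := by
    rw [hFdef]
    have : ∀ (i : Fin n) (k : Fin r), ((W₀ - V₀ * Q) i k)^2 =
        (W₀ i k)^2 + ((V₀ * Q) i k)^2 - 2 * (W₀ i k * (V₀ * Q) i k) := by
      intro i k
      rw [Matrix.sub_apply]
      ring
    rw [Finset.sum_congr rfl fun i _ => Finset.sum_congr rfl fun k _ => this i k]
    simp only [Finset.sum_sub_distrib, Finset.sum_add_distrib, ← Finset.mul_sum]
    rw [he1, he2, he3]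
    ring
  have hcrossMM : MM ≤ cross := by
    have h1 : (Mᵀ * M).trace = MM := by
      rw [hMMdef, Matrix.trace]
      refine Finset.sum_congr rfl fun k _ => ?_
      rw [Matrix.diag, Matrix.mul_apply]
      exact Finset.sum_congr rfl fun l _ => by rw [Matrix.transpose_apply, sq]
    have h2 : (Qᵀ * M).trace = cross := by
      rw [hcrossdef, Matrix.trace]
      refine Finset.sum_congr rfl fun k _ => ?_
      rw [Matrix.diag, Matrix.mul_apply]
      exact Finset.sum_congr rfl fun l _ => by rw [Matrix.transpose_apply]
    rw [← h1, ← h2]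
    exact htr
  -- conclude
  have hFle : F ≤ 2 * SS := by
    rw [hFval]
    linarith
  have hSSle : SS ≤ ((min r (n - r) : ℕ) : ℝ) *
      specNorm (W * Matrix.diagonal φ * Wᵀ - V * Matrix.diagonal ψ * Vᵀ)^2 / dlt^2 := by
    rw [le_div_iff₀ (by positivity)]
    calc SS * dlt^2 = dlt^2 * SS := by ring
      _ ≤ _ := hkey
  set spec : ℝ := specNorm (W * Matrix.diagonal φ * Wᵀ - V * Matrix.diagonal ψ * Vᵀ)
    with hspecdef
  have hspec0 : 0 ≤ spec := specNorm_nonneg _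
  have hRhs0 : 0 ≤ Real.sqrt (2 * ((min r (n - r) : ℕ) : ℝ)) * spec / dlt := by
    apply div_nonneg (mul_nonneg (Real.sqrt_nonneg _) hspec0) (le_of_lt hδ)
  have hRhssq : (Real.sqrt (2 * ((min r (n - r) : ℕ) : ℝ)) * spec / dlt)^2 =
      2 * ((min r (n - r) : ℕ) : ℝ) * spec^2 / dlt^2 := by
    rw [div_pow, mul_pow, Real.sq_sqrt (by positivity)]
  have hFle2 : F ≤ (Real.sqrt (2 * ((min r (n - r) : ℕ) : ℝ)) * spec / dlt)^2 := by
    rw [hRhssq]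
    calc F ≤ 2 * SS := hFle
      _ ≤ 2 * (((min r (n - r) : ℕ) : ℝ) * spec^2 / dlt^2) := by linarith [hSSle]
      _ = 2 * ((min r (n - r) : ℕ) : ℝ) * spec^2 / dlt^2 := by ring
  have : frobNorm (W₀ - V₀ * Q) = Real.sqrt F := by rw [frobNorm, hFdef]
  rw [this]
  calc Real.sqrt F ≤ Real.sqrt ((Real.sqrt (2 * ((min r (n - r) : ℕ) : ℝ)) * spec / dlt)^2) :=
        Real.sqrt_le_sqrt hFle2
    _ = Real.sqrt (2 * ((min r (n - r) : ℕ) : ℝ)) * spec / dlt := Real.sqrt_sq hRhs0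
end

section
/- Fix integers j ≥ 1 and r ≥ 1 with j + r + 1 ≤ n and let B = {j+1, …, j+r}. Suppose the eigengap assumption holds: φ_j < φ_{j+1}, φ_{j+r} < φ_{j+r+1}, ψ_j < ψ_{j+1} and ψ_{j+r} < ψ_{j+r+1}. Let p be a real polynomial; set a₁ = min_{i ∈ B} p(φᵢ), b₁ = max_{i ∈ B} p(φᵢ) and δ₁ = min(ψ_{j+r+1} − b₁, a₁ − ψ_j). Assume: (i) δ₁ > 0; (ii) for every l ∈ {1,…,n} \ B, either p(φ_l) < a₁ or p(φ_l) > b₁; (iii) a₁ − ψ_{j+1} < δ₁; (iv) ψ_{j+r} − b₁ < δ₁. Let W_j = [w_{j+1}, …, w_{j+r}] ∈ 𝕍_{n,r} and V_j = [v_{j+1}, …, v_{j+r}] ∈ 𝕍_{n,r}. Then ‖W_j W_jᵀ (I − V_j V_jᵀ)‖₂ ≤ ‖p(Φ) − Ψ‖₂ / δ₁. -/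
open Matrix

open scoped Matrix.Norms.L2Operator

namespace Stmt10Aux

variable {n : ℕ}

lemma dot_orth {W : Matrix (Fin n) (Fin n) ℝ} (hW : Wᵀ * W = 1) (x : Fin n → ℝ) :
    (W *ᵥ x) ⬝ᵥ (W *ᵥ x) = x ⬝ᵥ x := by
  rw [Matrix.dotProduct_mulVec, Matrix.vecMul_mulVec, hW, Matrix.vecMul_one]

lemma norm_symm_eq (y : Fin n → ℝ) :
    ‖(WithLp.equiv 2 (Fin n → ℝ)).symm y‖ = Real.sqrt (y ⬝ᵥ y) := by
  rw [EuclideanSpace.norm_eq]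
  congr 1
  simp [dotProduct, Real.norm_eq_abs, sq_abs, sq]

lemma specNorm_le_of {M : Matrix (Fin n) (Fin n) ℝ} {c : ℝ} (hc : 0 ≤ c)
    (h : ∀ x : Fin n → ℝ,
      Real.sqrt ((M *ᵥ x) ⬝ᵥ (M *ᵥ x)) ≤ c * Real.sqrt (x ⬝ᵥ x)) : ‖M‖ ≤ c := by
  rw [Matrix.l2_opNorm_def]
  apply ContinuousLinearMap.opNorm_le_bound _ hc
  intro x
  have h1 : (Matrix.toEuclideanLin.trans LinearMap.toContinuousLinearMap M) x
      = (WithLp.equiv 2 (Fin n → ℝ)).symm (M *ᵥ ((WithLp.equiv 2 (Fin n → ℝ)) x)) := rfl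
  have h2 : ‖x‖ = Real.sqrt (((WithLp.equiv 2 (Fin n → ℝ)) x) ⬝ᵥ ((WithLp.equiv 2 (Fin n → ℝ)) x)) :=
    norm_symm_eq ((WithLp.equiv 2 (Fin n → ℝ)) x)
  rw [h1, h2, norm_symm_eq]
  exact h _


lemma norm_orth_le {W : Matrix (Fin n) (Fin n) ℝ} (hW : Wᵀ * W = 1) : ‖W‖ ≤ 1 := by
  apply specNorm_le_of zero_le_one
  intro x
  rw [dot_orth hW, one_mul]

lemma norm_diag_le {f : Fin n → ℝ} {c : ℝ} (hc : 0 ≤ c) (h : ∀ i, |f i| ≤ c) :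
    ‖(Matrix.diagonal f : Matrix (Fin n) (Fin n) ℝ)‖ ≤ c := by
  apply specNorm_le_of hc
  intro x
  have key : (Matrix.diagonal f *ᵥ x) ⬝ᵥ (Matrix.diagonal f *ᵥ x) ≤ c ^ 2 * (x ⬝ᵥ x) := by
    simp only [dotProduct, Matrix.mulVec_diagonal, Finset.mul_sum]
    apply Finset.sum_le_sum
    intro i _
    have h1 : f i * x i * (f i * x i) = (f i)^2 * (x i * x i) := by ring
    have h2 : (f i)^2 ≤ c^2 := by
      have := h i
      nlinarith [abs_nonneg (f i), sq_abs (f i)]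
    rw [h1]
    exact mul_le_mul_of_nonneg_right h2 (mul_self_nonneg _)
  calc Real.sqrt ((Matrix.diagonal f *ᵥ x) ⬝ᵥ (Matrix.diagonal f *ᵥ x))
      ≤ Real.sqrt (c ^ 2 * (x ⬝ᵥ x)) := Real.sqrt_le_sqrt key
    _ = c * Real.sqrt (x ⬝ᵥ x) := by
        rw [Real.sqrt_mul (sq_nonneg c), Real.sqrt_sq hc]

lemma norm_conj_le {V : Matrix (Fin n) (Fin n) ℝ} (h1 : Vᵀ * V = 1) (h2 : V * Vᵀ = 1)
    {f : Fin n → ℝ} {c : ℝ} (hc : 0 ≤ c) (h : ∀ i, |f i| ≤ c) :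
    ‖V * Matrix.diagonal f * Vᵀ‖ ≤ c := by
  have hVt : ‖Vᵀ‖ ≤ 1 := norm_orth_le (by rwa [Matrix.transpose_transpose])
  have hV : ‖V‖ ≤ 1 := norm_orth_le h1
  calc ‖V * Matrix.diagonal f * Vᵀ‖ ≤ ‖V * Matrix.diagonal f‖ * ‖Vᵀ‖ := Matrix.l2_opNorm_mul _ _
    _ ≤ (‖V‖ * ‖Matrix.diagonal f‖) * ‖Vᵀ‖ := by
        apply mul_le_mul_of_nonneg_right (Matrix.l2_opNorm_mul _ _) (norm_nonneg _)
    _ ≤ (1 * c) * 1 := by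
        apply mul_le_mul _ hVt (norm_nonneg _) (by positivity)
        exact mul_le_mul hV (norm_diag_le hc h) (norm_nonneg _) zero_le_one
    _ = c := by ring


def conj (V : Matrix (Fin n) (Fin n) ℝ) (f : Fin n → ℝ) : Matrix (Fin n) (Fin n) ℝ :=
  V * Matrix.diagonal f * Vᵀ

lemma conj_mul {V : Matrix (Fin n) (Fin n) ℝ} (h1 : Vᵀ * V = 1) (f g : Fin n → ℝ) :
    conj V f * conj V g = conj V (f * g) := by
  simp only [conj, mul_assoc]
  rw [← mul_assoc Vᵀ V, h1, one_mul, ← mul_assoc (Matrix.diagonal f),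
    Matrix.diagonal_mul_diagonal]
  rfl

lemma conj_one {V : Matrix (Fin n) (Fin n) ℝ} (h2 : V * Vᵀ = 1) :
    conj V 1 = 1 := by
  unfold conj
  have e : Matrix.diagonal (1 : Fin n → ℝ) = Matrix.diagonal fun _ => (1 : ℝ) := rfl
  rw [e, Matrix.diagonal_one, mul_one, h2]

lemma conj_sub (V : Matrix (Fin n) (Fin n) ℝ) (f g : Fin n → ℝ) :
    conj V (f - g) = conj V f - conj V g := by
  unfold conj
  have e : Matrix.diagonal (f - g) = Matrix.diagonal fun i => f i - g i := rfl
  rw [e, ← Matrix.diagonal_sub, Matrix.mul_sub, Matrix.sub_mul]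

lemma conj_smul (V : Matrix (Fin n) (Fin n) ℝ) (c : ℝ) (f : Fin n → ℝ) :
    conj V (c • f) = c • conj V f := by
  simp only [conj, Matrix.diagonal_smul, Matrix.mul_smul, Matrix.smul_mul]

noncomputable def conjAlgHom (V : Matrix (Fin n) (Fin n) ℝ) (h1 : Vᵀ * V = 1)
    (h2 : V * Vᵀ = 1) : (Fin n → ℝ) →ₐ[ℝ] Matrix (Fin n) (Fin n) ℝ where
  toFun f := conj V f
  map_one' := conj_one h2
  map_mul' f g := (conj_mul h1 f g).symm
  map_zero' := by
    show V * Matrix.diagonal (0 : Fin n → ℝ) * Vᵀ = 0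
    have e : Matrix.diagonal (0 : Fin n → ℝ) = Matrix.diagonal fun _ => (0 : ℝ) := rfl
    rw [e, Matrix.diagonal_zero, mul_zero, zero_mul]
  map_add' f g := by
    show V * Matrix.diagonal (f + g) * Vᵀ = V * Matrix.diagonal f * Vᵀ + V * Matrix.diagonal g * Vᵀ
    have e : Matrix.diagonal (f + g) = Matrix.diagonal fun i => f i + g i := rfl
    rw [e, ← Matrix.diagonal_add, Matrix.mul_add, Matrix.add_mul]
  commutes' r := by
    simp only [conj]
    rw [Matrix.algebraMap_eq_diagonal]
    have h3 : (algebraMap ℝ (Fin n → ℝ)) r = r • (1 : Fin n → ℝ) :=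
      Algebra.algebraMap_eq_smul_one r
    have e : Matrix.diagonal (1 : Fin n → ℝ) = Matrix.diagonal fun _ => (1 : ℝ) := rfl
    rw [h3, Matrix.diagonal_smul, Matrix.mul_smul, Matrix.smul_mul, e,
      Matrix.diagonal_one, mul_one, h2]

lemma aeval_pi (φ : Fin n → ℝ) (p : Polynomial ℝ) :
    (Polynomial.aeval φ p : Fin n → ℝ) = fun i => p.eval (φ i) := by
  funext i
  have h := Polynomial.aeval_algHom_apply (Pi.evalAlgHom ℝ (fun _ : Fin n => ℝ) i) φ p
  simp only [Pi.evalAlgHom_apply] at h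
  rw [← h, ← Polynomial.coe_aeval_eq_eval]

lemma aeval_conj {V : Matrix (Fin n) (Fin n) ℝ} (h1 : Vᵀ * V = 1) (h2 : V * Vᵀ = 1)
    (φ : Fin n → ℝ) (p : Polynomial ℝ) :
    Polynomial.aeval (conj V φ) p = conj V (fun i => p.eval (φ i)) := by
  have h := Polynomial.aeval_algHom_apply (conjAlgHom V h1 h2) φ p
  have h' : (conjAlgHom V h1 h2) φ = conj V φ := rfl
  rw [h'] at h
  rw [h, ← aeval_pi φ p]
  rfl


def embAux (j r : ℕ) (hn : j + r ≤ n) : Fin r ↪ Fin n :=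
  ⟨fun k => ⟨j + k, by omega⟩, fun a b h => by
    have := congrArg Fin.val h
    simp only at this
    exact Fin.ext (by omega)⟩

lemma outer_eq_conj {j r : ℕ} (hn : j + r ≤ n) (W : Matrix (Fin n) (Fin n) ℝ)
    (Wj : Matrix (Fin n) (Fin r) ℝ)
    (hWj : ∀ (i : Fin n) (k : Fin r), Wj i k = W i ⟨j + k, by omega⟩) :
    Wj * Wjᵀ = conj W (fun m : Fin n => if j ≤ (m : ℕ) ∧ (m : ℕ) < j + r then (1:ℝ) else 0) := by
  set χ : Fin n → ℝ := fun m => if j ≤ (m : ℕ) ∧ (m : ℕ) < j + r then (1:ℝ) else 0 with hχ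
  ext i i'
  have hR : (conj W χ) i i' = ∑ m, (W i m * χ m) * W i' m := by
    rw [conj, Matrix.mul_apply]
    refine Finset.sum_congr rfl fun m _ => ?_
    rw [Matrix.mul_diagonal, Matrix.transpose_apply]
  have hL : (Wj * Wjᵀ) i i' = ∑ k : Fin r, W i (embAux j r hn k) * W i' (embAux j r hn k) := by
    rw [Matrix.mul_apply]
    refine Finset.sum_congr rfl fun k _ => ?_
    rw [Matrix.transpose_apply, hWj, hWj]
    rfl
  rw [hL, hR]
  have hterm : ∀ m : Fin n, (W i m * χ m) * W i' m =
      if j ≤ (m : ℕ) ∧ (m : ℕ) < j + r then W i m * W i' m else 0 := by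
    intro m
    rw [hχ]
    by_cases h : j ≤ (m : ℕ) ∧ (m : ℕ) < j + r <;> simp [h]
  rw [Finset.sum_congr rfl (fun m _ => hterm m), ← Finset.sum_filter]
  have hset : Finset.univ.filter (fun m : Fin n => j ≤ (m : ℕ) ∧ (m : ℕ) < j + r)
      = Finset.univ.map (embAux j r hn) := by
    ext m
    simp only [Finset.mem_filter, Finset.mem_univ, true_and, Finset.mem_map, embAux,
      Function.Embedding.coeFn_mk]
    constructor
    · rintro ⟨h1, h2⟩
      refine ⟨⟨(m : ℕ) - j, by omega⟩, ?_⟩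
      exact Fin.ext (by show j + ((m : ℕ) - j) = (m : ℕ); omega)
    · rintro ⟨k, hk⟩
      have hkv : (j + (k : ℕ)) = (m : ℕ) := by
        have := congrArg Fin.val hk
        exact this
      have := k.isLt
      omega
  rw [hset, Finset.sum_map]


lemma conj_add (V : Matrix (Fin n) (Fin n) ℝ) (f g : Fin n → ℝ) :
    conj V (f + g) = conj V f + conj V g := by
  unfold conj
  have e : Matrix.diagonal (f + g) = Matrix.diagonal fun i => f i + g i := rfl
  rw [e, ← Matrix.diagonal_add, Matrix.mul_add, Matrix.add_mul]

lemma specNorm_eq {m r : ℕ} (M : Matrix (Fin m) (Fin r) ℝ) : specNorm M = ‖M‖ := rfl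

end Stmt10Aux

open Stmt10Aux in
/-- Extended Davis–Kahan theorem with a polynomial transform, interval
choice (9) (i.e. `a₁ = min_{i∈B} p(φᵢ)`, `b₁ = max_{i∈B} p(φᵢ)`,
`δ₁ = min(ψ_{j+r+1} − b₁, a₁ − ψ_j)`), spectral-norm version.
Eigenvalues are 1-indexed in the paper; here `φ ⟨k-1⟩` plays the role of `φ_k`. -/
theorem stmt_10 (n j r : ℕ) (hj : 1 ≤ j) (hr : 1 ≤ r) (hn : j + r + 1 ≤ n)
    (Φ Ψ W V : Matrix (Fin n) (Fin n) ℝ)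
    (φ ψ : Fin n → ℝ) (hφmono : Monotone φ) (hψmono : Monotone ψ)
    (hW : Wᵀ * W = 1 ∧ W * Wᵀ = 1) (hV : Vᵀ * V = 1 ∧ V * Vᵀ = 1)
    (hΦ : Φ = W * Matrix.diagonal φ * Wᵀ) (hΨ : Ψ = V * Matrix.diagonal ψ * Vᵀ)
    (hgapφ1 : φ ⟨j - 1, by omega⟩ < φ ⟨j, by omega⟩)
    (hgapφ2 : φ ⟨j + r - 1, by omega⟩ < φ ⟨j + r, by omega⟩)
    (hgapψ1 : ψ ⟨j - 1, by omega⟩ < ψ ⟨j, by omega⟩)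
    (hgapψ2 : ψ ⟨j + r - 1, by omega⟩ < ψ ⟨j + r, by omega⟩)
    (p : Polynomial ℝ) (a₁ b₁ δ₁ : ℝ)
    (ha₁ : a₁ = Finset.univ.inf' ⟨⟨0, hr⟩, Finset.mem_univ _⟩
        (fun k : Fin r => p.eval (φ ⟨j + k, by omega⟩)))
    (hb₁ : b₁ = Finset.univ.sup' ⟨⟨0, hr⟩, Finset.mem_univ _⟩
        (fun k : Fin r => p.eval (φ ⟨j + k, by omega⟩)))
    (hδ₁ : δ₁ = min (ψ ⟨j + r, by omega⟩ - b₁) (a₁ - ψ ⟨j - 1, by omega⟩))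
    (hδ₁pos : 0 < δ₁)
    (houtside : ∀ l : Fin n, (l.val < j ∨ j + r ≤ l.val) →
        p.eval (φ l) < a₁ ∨ b₁ < p.eval (φ l))
    (hiii : a₁ - ψ ⟨j, by omega⟩ < δ₁)
    (hiv : ψ ⟨j + r - 1, by omega⟩ - b₁ < δ₁)
    (Wj Vj : Matrix (Fin n) (Fin r) ℝ)
    (hWj : Wj = Matrix.of fun i (k : Fin r) => W i ⟨j + k, by omega⟩)
    (hVj : Vj = Matrix.of fun i (k : Fin r) => V i ⟨j + k, by omega⟩) :
    specNorm (Wj * Wjᵀ * (1 - Vj * Vjᵀ)) ≤ specNorm ((Polynomial.aeval Φ) p - Ψ) / δ₁ := by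
  classical
  obtain ⟨hW1, hW2⟩ := hW
  obtain ⟨hV1, hV2⟩ := hV
  set c : ℝ := (a₁ + b₁) / 2 with hc
  set ρ : ℝ := (b₁ - a₁) / 2 with hρdef
  have hab : a₁ ≤ b₁ := by
    rw [ha₁, hb₁]
    exact le_trans
      (Finset.inf'_le (fun k : Fin r => p.eval (φ ⟨j + k, by omega⟩))
        (Finset.mem_univ (⟨0, hr⟩ : Fin r)))
      (Finset.le_sup' (fun k : Fin r => p.eval (φ ⟨j + k, by omega⟩))
        (Finset.mem_univ (⟨0, hr⟩ : Fin r)))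
  have hρ : 0 ≤ ρ := by rw [hρdef]; linarith
  set χ : Fin n → ℝ := fun m => if j ≤ (m : ℕ) ∧ (m : ℕ) < j + r then (1:ℝ) else 0 with hχ
  set pφ : Fin n → ℝ := fun i => p.eval (φ i) with hpφ
  have hδ1 : δ₁ ≤ ψ ⟨j + r, by omega⟩ - b₁ := by rw [hδ₁]; exact min_le_left _ _
  have hδ2 : δ₁ ≤ a₁ - ψ ⟨j - 1, by omega⟩ := by rw [hδ₁]; exact min_le_right _ _
  have hψsep : ∀ m : Fin n, ¬(j ≤ (m:ℕ) ∧ (m:ℕ) < j + r) → ρ + δ₁ ≤ |ψ m - c| := by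
    intro m hm
    rcases Nat.lt_or_ge (m : ℕ) j with h | h
    · have h1 : ψ m ≤ ψ ⟨j - 1, by omega⟩ := hψmono (by simp only [Fin.le_def]; omega)
      have h2 : ρ + δ₁ ≤ c - ψ m := by rw [hρdef, hc]; linarith
      calc ρ + δ₁ ≤ c - ψ m := h2
        _ ≤ |ψ m - c| := by rw [abs_sub_comm]; exact le_abs_self _
    · have h2 : j + r ≤ (m:ℕ) := by omega
      have h1 : ψ ⟨j + r, by omega⟩ ≤ ψ m := hψmono (by simp only [Fin.le_def]; omega)
      calc ρ + δ₁ ≤ ψ m - c := by rw [hρdef, hc]; linarith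
        _ ≤ |ψ m - c| := le_abs_self _
  have hρδ : 0 < ρ + δ₁ := by linarith
  set g : Fin n → ℝ := fun m => if j ≤ (m:ℕ) ∧ (m:ℕ) < j + r then 0 else (ψ m - c)⁻¹ with hg
  have hχval : ∀ m : Fin n, χ m = if j ≤ (m:ℕ) ∧ (m:ℕ) < j + r then (1:ℝ) else 0 :=
    fun m => rfl
  have hgval : ∀ m : Fin n, g m = if j ≤ (m:ℕ) ∧ (m:ℕ) < j + r then 0 else (ψ m - c)⁻¹ :=
    fun m => rfl
  have hpB : ∀ m : Fin n, j ≤ (m:ℕ) → (m:ℕ) < j + r → a₁ ≤ pφ m ∧ pφ m ≤ b₁ := by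
    intro m h1 h2
    have hk : (m:ℕ) - j < r := by omega
    have hm : m = (⟨j + ((m:ℕ) - j), by omega⟩ : Fin n) := Fin.ext (by simp; omega)
    constructor
    · rw [ha₁, hpφ]
      have h3 := Finset.inf'_le (fun k : Fin r => p.eval (φ ⟨j + k, by omega⟩))
        (Finset.mem_univ (⟨(m:ℕ) - j, hk⟩ : Fin r))
      rw [hm]
      exact h3
    · rw [hb₁, hpφ]
      have h3 := Finset.le_sup' (fun k : Fin r => p.eval (φ ⟨j + k, by omega⟩))
        (Finset.mem_univ (⟨(m:ℕ) - j, hk⟩ : Fin r))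
      rw [hm]
      exact h3
  -- matrices
  set P := conj W χ with hP
  set Q := conj V χ with hQ
  set R := conj V (1 - χ) with hR
  set E := (Polynomial.aeval Φ) p - Ψ with hE
  set T := conj V g with hT
  set A := conj W (fun m => (pφ m - c) * χ m) with hA
  have hWjP : Wj * Wjᵀ = P := by
    rw [hP]
    exact outer_eq_conj (by omega) W Wj (fun i k => by rw [hWj]; rfl)
  have hVjQ : Vj * Vjᵀ = Q := by
    rw [hQ]
    exact outer_eq_conj (by omega) V Vj (fun i k => by rw [hVj]; rfl)
  have h1mQ : (1 : Matrix (Fin n) (Fin n) ℝ) - Q = R := by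
    rw [hR, conj_sub, conj_one hV2, hQ]
  set X := P * (1 - Q) with hX
  set M := P * E * R with hM
  have hΦ' : Φ = conj W φ := hΦ
  have hΨ' : Ψ = conj V ψ := hΨ
  have hEeq : E = conj W pφ - conj V ψ := by
    rw [hE, hΦ', aeval_conj hW1 hW2, hΨ', hpφ]
  have hfAP : (fun m => (pφ m - c) * χ m) * χ = fun m => (pφ m - c) * χ m := by
    funext m
    simp only [Pi.mul_apply]
    rw [hχval m]
    by_cases h : j ≤ (m:ℕ) ∧ (m:ℕ) < j + r
    · rw [if_pos h]; ring
    · rw [if_neg h]; ring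
  have hAP : A * P = A := by
    rw [hA, hP, conj_mul hW1, hfAP]
  have hAX : A * X = A * R := by
    rw [hX, h1mQ, ← mul_assoc, hAP]
  have hMeq : M = conj W (χ * pφ) * R - P * conj V (ψ * (1 - χ)) := by
    rw [hM, hEeq, mul_sub, sub_mul, hP, conj_mul hW1, mul_assoc, hR, conj_mul hV1]
  have hfdiff : (fun m => (pφ m - c) * χ m) - χ * pφ = (-c) • χ := by
    funext m
    simp only [Pi.sub_apply, Pi.mul_apply, Pi.smul_apply, smul_eq_mul]
    ring
  have hdiff : A - conj W (χ * pφ) = (-c) • P := by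
    rw [hA, hP, ← conj_sub, hfdiff, conj_smul]
  have hne : ∀ m : Fin n, ¬(j ≤ (m:ℕ) ∧ (m:ℕ) < j + r) → ψ m - c ≠ 0 := by
    intro m hm h0
    have := hψsep m hm
    rw [h0, abs_zero] at this
    linarith
  have key : (A * X - M) * T = X := by
    rw [hAX, hMeq]
    have e1 : A * R - (conj W (χ * pφ) * R - P * conj V (ψ * (1 - χ)))
        = (A - conj W (χ * pφ)) * R + P * conj V (ψ * (1 - χ)) := by
      rw [sub_mul]
      abel
    rw [e1, hdiff]
    have e2 : (-c) • P * R = P * ((-c) • R) := by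
      rw [smul_mul_assoc, mul_smul_comm]
    rw [e2, ← mul_add]
    have hfe3 : (-c) • ((1:Fin n → ℝ) - χ) + ψ * (1 - χ) = fun m => (ψ m - c) * (1 - χ m) := by
      funext m
      simp only [Pi.add_apply, Pi.smul_apply, Pi.mul_apply, Pi.sub_apply, Pi.one_apply,
        smul_eq_mul]
      ring
    have e3 : (-c) • R + conj V (ψ * (1 - χ)) = conj V (fun m => (ψ m - c) * (1 - χ m)) := by
      rw [hR, ← conj_smul, ← conj_add, hfe3]
    rw [e3, hT, mul_assoc, conj_mul hV1]
    have e4 : (fun m => (ψ m - c) * (1 - χ m)) * g = 1 - χ := by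
      funext m
      rw [Pi.mul_apply, Pi.sub_apply, Pi.one_apply, hg, hχ]
      by_cases h : j ≤ (m:ℕ) ∧ (m:ℕ) < j + r
      · simp [h]
      · simp only [h, if_false]
        field_simp [hne m h]
    rw [e4, ← hR, hX, h1mQ]
  -- norm bounds
  have hnormP : ‖P‖ ≤ 1 := by
    rw [hP]
    refine norm_conj_le hW1 hW2 zero_le_one fun i => ?_
    rw [hχval i]
    by_cases h : j ≤ (i:ℕ) ∧ (i:ℕ) < j + r
    · rw [if_pos h]; simp
    · rw [if_neg h]; simp
  have hnormR : ‖R‖ ≤ 1 := by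
    rw [hR]
    refine norm_conj_le hV1 hV2 zero_le_one fun i => ?_
    rw [Pi.sub_apply, Pi.one_apply, hχval i]
    by_cases h : j ≤ (i:ℕ) ∧ (i:ℕ) < j + r
    · rw [if_pos h]; simp
    · rw [if_neg h]; simp
  have hnormT : ‖T‖ ≤ (ρ + δ₁)⁻¹ := by
    rw [hT]
    refine norm_conj_le hV1 hV2 (by positivity) fun i => ?_
    rw [hgval i]
    by_cases h : j ≤ (i:ℕ) ∧ (i:ℕ) < j + r
    · rw [if_pos h, abs_zero]
      positivity
    · rw [if_neg h, abs_inv]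
      exact inv_anti₀ hρδ (hψsep i h)
  have hnormA : ‖A‖ ≤ ρ := by
    rw [hA]
    refine norm_conj_le hW1 hW2 hρ fun i => ?_
    rw [hχval i]
    by_cases h : j ≤ (i:ℕ) ∧ (i:ℕ) < j + r
    · rw [if_pos h, mul_one]
      have h2 := hpB i h.1 h.2
      rw [abs_le]
      constructor <;> [linarith [h2.1]; linarith [h2.2]]
    · rw [if_neg h, mul_zero, abs_zero]
      exact hρ
  have hnormM : ‖M‖ ≤ ‖E‖ := by
    rw [hM]
    calc ‖P * E * R‖ ≤ ‖P * E‖ * ‖R‖ := Matrix.l2_opNorm_mul _ _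
      _ ≤ (‖P‖ * ‖E‖) * ‖R‖ :=
          mul_le_mul_of_nonneg_right (Matrix.l2_opNorm_mul _ _) (norm_nonneg _)
      _ ≤ (1 * ‖E‖) * 1 := by
          apply mul_le_mul _ hnormR (norm_nonneg _) (by positivity)
          exact mul_le_mul_of_nonneg_right hnormP (norm_nonneg _)
      _ = ‖E‖ := by ring
  have hXbound : ‖X‖ ≤ (ρ * ‖X‖ + ‖E‖) * (ρ + δ₁)⁻¹ := by
    calc ‖X‖ = ‖(A * X - M) * T‖ := by rw [key]
      _ ≤ ‖A * X - M‖ * ‖T‖ := Matrix.l2_opNorm_mul _ _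
      _ ≤ (ρ * ‖X‖ + ‖E‖) * (ρ + δ₁)⁻¹ := by
          apply mul_le_mul _ hnormT (norm_nonneg _) _
          · calc ‖A * X - M‖ ≤ ‖A * X‖ + ‖M‖ := norm_sub_le _ _
              _ ≤ ‖A‖ * ‖X‖ + ‖E‖ := add_le_add (Matrix.l2_opNorm_mul _ _) hnormM
              _ ≤ ρ * ‖X‖ + ‖E‖ := by
                  have := mul_le_mul_of_nonneg_right hnormA (norm_nonneg X)
                  linarith
          · positivity
  have hfinal : ‖X‖ ≤ ‖E‖ / δ₁ := by
    rw [le_div_iff₀ hδ₁pos]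
    have h5 : ‖X‖ * (ρ + δ₁) ≤ ρ * ‖X‖ + ‖E‖ := by
      have := mul_le_mul_of_nonneg_right hXbound (le_of_lt hρδ)
      rwa [mul_assoc, inv_mul_cancel₀ (ne_of_gt hρδ), mul_one] at this
    linarith [h5]
  rw [hWjP, hVjQ, specNorm_eq, specNorm_eq, ← hX]
  exact hfinal
end
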